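/- arXiv:1902.08294 — 5 statements merged into one kernel-verified Lean document; each statement's English description precedes it below -/
import Mathlib

section
/- Suppose Assumptions A, B and C-1 hold and let (x^r, y^r) be generated by HiBSA (strongly concave case) with γ^r = 0 and constant β^r = β > 0. Then for every iteration r, ℓ(x^{r+1}, y^r) − ℓ(x^r, y^r) ≤ −Σ_{i=1}^K (β + μ_i − L_{x_i}/2) ‖x_i^{r+1} − x_i^r‖². -/
open scoped RealInnerProductSpace

/-- The `i`-th block space `ℝ^N`. -/
abbrev Blk (N : ℕ) : Type := EuclideanSpace ℝ (Fin N)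

/-- The full `x`-space `ℝ^{NK}`, with the Euclidean (ℓ²) product norm. -/
abbrev XVec (N K : ℕ) : Type := PiLp 2 (fun _ : Fin K => Blk N)

/-- The `y`-space `ℝ^M`. -/
abbrev YVec (M : ℕ) : Type := EuclideanSpace ℝ (Fin M)

/-- `hibsaW xs r i = w_i^{r+1} = (x_1^{r+1},…,x_{i−1}^{r+1}, x_i^r,…,x_K^r)`. -/
noncomputable def hibsaW {N K : ℕ} (xs : ℕ → XVec N K) (r : ℕ) (i : Fin K) : XVec N K :=
  WithLp.toLp 2 (fun j : Fin K => if (j : ℕ) < (i : ℕ) then xs (r + 1) j else xs r j)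

/-- Replace the `i`-th block of `x` by `z`. -/
noncomputable def blockUpdate {N K : ℕ} (x : XVec N K) (i : Fin K) (z : Blk N) : XVec N K :=
  WithLp.toLp 2 (Function.update x i z)

/-! Each block update is a proximal step on the strongly convex surrogate `U_i`. Along the
Gauss–Seidel sweep, the block descent lemma for `f` bounds the change of `f` by
`⟪∇_i f, Δ_i⟫ + L_{x_i}/2 ‖Δ_i‖²`. Gradient consistency turns `∇_i f` into `∇U_i` at the old block,
strong convexity of `U_i` moves it to the new block at a gain of `μ_i ‖Δ_i‖²`, and first-order
optimality of the proximal step bounds `⟪∇U_i, Δ_i⟫` by `h_i(x_i^r) − h_i(x_i^{r+1}) − β ‖Δ_i‖²`.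
The per-block inequalities then telescope. -/

open Set

theorem le_add_deriv_add_half_of_deriv_le {χ χ' : ℝ → ℝ} {L : ℝ}
    (hχ : ∀ t ∈ Icc (0 : ℝ) 1, HasDerivAt χ (χ' t) t)
    (hL : ∀ t ∈ Icc (0 : ℝ) 1, χ' t ≤ χ' 0 + L * t) :
    χ 1 ≤ χ 0 + χ' 0 + L / 2 := by
  let ξ : ℝ → ℝ := fun t => χ t - χ' 0 * t - L / 2 * t ^ 2
  have hξ : ∀ t ∈ Icc (0 : ℝ) 1, HasDerivAt ξ (χ' t - χ' 0 - L * t) t := fun t ht =>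
    (((hχ t ht).sub ((hasDerivAt_id t).const_mul (χ' 0))).sub
      ((hasDerivAt_pow 2 t).const_mul (L / 2))).congr_deriv (by norm_num; ring)
  have hanti : AntitoneOn ξ (Icc 0 1) := by
    refine antitoneOn_of_hasDerivWithinAt_nonpos (f' := fun t => χ' t - χ' 0 - L * t)
      (convex_Icc 0 1)
      (fun t ht => (hξ t ht).continuousAt.continuousWithinAt) (fun t ht => ?_) (fun t ht => ?_)
    · exact (hξ t (interior_subset ht)).hasDerivWithinAt
    · linarith [hL t (interior_subset ht)]
  have := hanti (left_mem_Icc.2 zero_le_one) (right_mem_Icc.2 zero_le_one) zero_le_one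
  simp only [ξ] at this
  linarith

theorem IsMinOn.nonneg_of_hasDerivAt_Icc {χ : ℝ → ℝ} {d : ℝ} (hmin : IsMinOn χ (Icc 0 1) 0)
    (hχ : HasDerivAt χ d 0) : 0 ≤ d := by
  have h1 : (1 : ℝ) ∈ posTangentConeAt (Icc (0 : ℝ) 1) 0 :=
    mem_posTangentConeAt_of_segment_subset (by rw [zero_add, segment_eq_Icc zero_le_one])
  simpa using hmin.localize.hasFDerivWithinAt_nonneg hχ.hasDerivWithinAt.hasFDerivWithinAt h1

section InnerProductSpace

variable {E : Type*} [NormedAddCommGroup E] [InnerProductSpace ℝ E] [CompleteSpace E]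

theorem HasGradientAt.hasDerivAt_comp_add_smul {φ : E → ℝ} {G x v : E} {t : ℝ}
    (h : HasGradientAt φ G (x + t • v)) :
    HasDerivAt (fun s : ℝ => φ (x + s • v)) ⟪G, v⟫ t := by
  have hline : HasDerivAt (fun s : ℝ => x + s • v) v t := by
    simpa using ((hasDerivAt_id t).smul_const v).const_add x
  exact h.hasFDerivAt.comp_hasDerivAt t hline

theorem le_add_inner_add_of_inner_gradient_sub_le {φ : E → ℝ} {G : E → E} {x y : E} {L : ℝ}
    (hG : ∀ z ∈ segment ℝ x y, HasGradientAt φ (G z) z)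
    (hL : ∀ z ∈ segment ℝ x y, ⟪G z - G x, y - x⟫ ≤ L * ‖z - x‖ * ‖y - x‖) :
    φ y ≤ φ x + ⟪G x, y - x⟫ + L / 2 * ‖y - x‖ ^ 2 := by
  have hseg : ∀ t ∈ Icc (0 : ℝ) 1, x + t • (y - x) ∈ segment ℝ x y := fun t ht => by
    rw [segment_eq_image']; exact ⟨t, ht, rfl⟩
  have key := le_add_deriv_add_half_of_deriv_le (χ := fun t => φ (x + t • (y - x)))
    (χ' := fun t => ⟪G (x + t • (y - x)), y - x⟫) (L := L * ‖y - x‖ ^ 2)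
    (fun t ht => (hG _ (hseg t ht)).hasDerivAt_comp_add_smul) (fun t ht => by
      have h := hL _ (hseg t ht)
      rw [inner_sub_left, add_sub_cancel_left, norm_smul, Real.norm_of_nonneg ht.1] at h
      simp only [zero_smul, add_zero]
      linarith)
  simpa [mul_div_right_comm] using key

theorem IsMinOn.inner_gradient_le_of_proximal {φ ψ : E → ℝ} {s : Set E} {G a b : E} {β : ℝ}
    (hs : Convex ℝ s) (hψ : ConvexOn ℝ s ψ) (hφ : HasGradientAt φ G b) (ha : a ∈ s) (hb : b ∈ s)
    (hmin : IsMinOn (fun z => φ z + ψ z + β / 2 * ‖z - a‖ ^ 2) s b) :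
    ⟪G, b - a⟫ ≤ ψ a - ψ b - β * ‖b - a‖ ^ 2 := by
  let χ : ℝ → ℝ := fun t =>
    φ (b + t • (a - b)) + ((1 - t) * ψ b + t * ψ a) + β / 2 * ((1 - t) ^ 2 * ‖b - a‖ ^ 2)
  have hχ : HasDerivAt χ (⟪G, a - b⟫ + (ψ a - ψ b) - β * ‖b - a‖ ^ 2) 0 := by
    have hφ' : HasGradientAt φ G (b + (0 : ℝ) • (a - b)) := by simpa using hφ
    have hlin : HasDerivAt (fun t : ℝ => (1 - t) * ψ b + t * ψ a) (ψ a - ψ b) 0 :=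
      ((((hasDerivAt_id 0).const_sub 1).mul_const (ψ b)).add
        ((hasDerivAt_id 0).mul_const (ψ a))).congr_deriv (by ring)
    have hquad : HasDerivAt (fun t : ℝ => β / 2 * ((1 - t) ^ 2 * ‖b - a‖ ^ 2))
        (-(β * ‖b - a‖ ^ 2)) 0 :=
      (((((hasDerivAt_id 0).const_sub 1).pow 2).mul_const (‖b - a‖ ^ 2)).const_mul
        (β / 2)).congr_deriv (by norm_num; ring)
    exact ((hφ'.hasDerivAt_comp_add_smul.add hlin).add hquad).congr_deriv (by ring)
  -- On the segment from `b` to `a`, `χ` dominates the proximal objective, with equality at `b`.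
  have hχmin : IsMinOn χ (Icc 0 1) 0 := isMinOn_iff.2 fun t ht => by
    have h1t : 0 ≤ 1 - t := sub_nonneg.2 ht.2
    have hz : b + t • (a - b) = (1 - t) • b + t • a := by
      rw [smul_sub, sub_smul, one_smul]; abel
    have hza : b + t • (a - b) - a = (1 - t) • (b - a) := by
      rw [hz, smul_sub, sub_smul, sub_smul, one_smul, one_smul]; abel
    have hconv := @hψ.2 _ hb _ ha (1 - t) t h1t ht.1 (by ring)
    have hval := isMinOn_iff.1 hmin _ (hz ▸ hs hb ha h1t ht.1 (by ring))
    rw [hza, norm_smul, mul_pow, Real.norm_of_nonneg h1t] at hval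
    simp only [χ, smul_eq_mul] at hconv ⊢
    rw [hz] at hval ⊢
    simp only [zero_smul, add_zero, sub_zero, one_pow, one_mul, zero_mul]
    linarith
  have := hχmin.nonneg_of_hasDerivAt_Icc hχ
  rw [← neg_sub b a, inner_neg_right] at this
  linarith

end InnerProductSpace

section Blocks

variable {N K : ℕ}

theorem convex_setOf_forall_mem_block {Xi : Fin K → Set (Blk N)} (hXi : ∀ j, Convex ℝ (Xi j)) :
    Convex ℝ {x : XVec N K | ∀ j, x j ∈ Xi j} := fun _ hx _ hy _ _ ha hb hab j =>
  hXi j (hx j) (hy j) ha hb hab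

theorem blockUpdate_mem {Xi : Fin K → Set (Blk N)} {x : XVec N K} {i : Fin K} {z : Blk N}
    (hx : ∀ j, x j ∈ Xi j) (hz : z ∈ Xi i) (j : Fin K) : blockUpdate x i z j ∈ Xi j := by
  rcases eq_or_ne j i with rfl | hj
  · simpa [blockUpdate] using hz
  · simpa [blockUpdate, hj] using hx j

theorem blockUpdate_sub_self (x : XVec N K) (i : Fin K) (z : Blk N) :
    blockUpdate x i z - x = PiLp.single 2 i (z - x i) := by
  ext1 j
  rcases eq_or_ne j i with rfl | hj
  · simp [blockUpdate]
  · simp [blockUpdate, hj]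

theorem inner_blockUpdate_sub_self (u x : XVec N K) (i : Fin K) (z : Blk N) :
    ⟪u, blockUpdate x i z - x⟫ = ⟪u i, z - x i⟫ := by
  rw [blockUpdate_sub_self, PiLp.inner_apply, Fintype.sum_eq_single i fun j hj => by simp [hj]]
  simp

theorem norm_blockUpdate_sub_self (x : XVec N K) (i : Fin K) (z : Blk N) :
    ‖blockUpdate x i z - x‖ = ‖z - x i‖ := by
  rw [blockUpdate_sub_self, PiLp.norm_single]

theorem le_add_inner_add_blockUpdate {f : XVec N K → ℝ} {G : XVec N K → XVec N K}
    {Xi : Fin K → Set (Blk N)} {i : Fin K} {L : ℝ} {w : XVec N K} {z : Blk N}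
    (hXi : ∀ j, Convex ℝ (Xi j)) (hG : ∀ x, HasGradientAt f (G x) x)
    (hL : ∀ x x' : XVec N K, (∀ j, x j ∈ Xi j) → (∀ j, x' j ∈ Xi j) →
      ‖G x' i - G x i‖ ≤ L * ‖x' - x‖)
    (hw : ∀ j, w j ∈ Xi j) (hz : z ∈ Xi i) :
    f (blockUpdate w i z) ≤ f w + ⟪G w i, z - w i⟫ + L / 2 * ‖z - w i‖ ^ 2 := by
  have hseg := (convex_setOf_forall_mem_block hXi).segment_subset hw (blockUpdate_mem hw hz)
  have := le_add_inner_add_of_inner_gradient_sub_le (fun x _ => hG x) fun x hx => by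
    rw [inner_blockUpdate_sub_self, norm_blockUpdate_sub_self, PiLp.sub_apply]
    exact (real_inner_le_norm _ _).trans
      (mul_le_mul_of_nonneg_right (hL w x hw (hseg hx)) (norm_nonneg _))
  rwa [inner_blockUpdate_sub_self, norm_blockUpdate_sub_self] at this

theorem block_descent_of_isMinOn_proximal {f : XVec N K → ℝ} {Gf : XVec N K → XVec N K}
    {Xi : Fin K → Set (Blk N)} {i : Fin K} {L μ β : ℝ} {h U : Blk N → ℝ} {GU : Blk N → Blk N}
    {w : XVec N K} {z : Blk N}
    (hXi : ∀ j, Convex ℝ (Xi j)) (hh : ConvexOn ℝ (Xi i) h)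
    (hGf : ∀ x, HasGradientAt f (Gf x) x)
    (hL : ∀ x x' : XVec N K, (∀ j, x j ∈ Xi j) → (∀ j, x' j ∈ Xi j) →
      ‖Gf x' i - Gf x i‖ ≤ L * ‖x' - x‖)
    (hGU : HasGradientAt U (GU z) z)
    (hμ : ∀ u u', u ∈ Xi i → u' ∈ Xi i → ⟪GU u', u - u'⟫ + μ / 2 * ‖u - u'‖ ^ 2 ≤ U u - U u')
    (hcons : GU (w i) = Gf w i) (hw : ∀ j, w j ∈ Xi j) (hz : z ∈ Xi i)
    (hmin : IsMinOn (fun u => U u + h u + β / 2 * ‖u - w i‖ ^ 2) (Xi i) z) :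
    f (blockUpdate w i z) + h z - (f w + h (w i)) ≤ -((β + μ - L / 2) * ‖z - w i‖ ^ 2) := by
  have hdescent := le_add_inner_add_blockUpdate hXi hGf hL hw hz
  have hmono : ⟪GU (w i), z - w i⟫ ≤ ⟪GU z, z - w i⟫ - μ * ‖z - w i‖ ^ 2 := by
    have h1 := hμ z (w i) hz (hw i)
    have h2 := hμ (w i) z (hw i) hz
    rw [← neg_sub z (w i), inner_neg_right, norm_neg] at h2
    linarith
  have hopt := hmin.inner_gradient_le_of_proximal (hXi i) hh hGU (hw i) hz
  rw [hcons] at hmono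
  linarith

end Blocks

section PrefixUpdate

variable {N K : ℕ}

noncomputable def prefixUpdate (x x' : XVec N K) (n : ℕ) : XVec N K :=
  WithLp.toLp 2 (fun j : Fin K => if (j : ℕ) < n then x' j else x j)

theorem hibsaW_eq_prefixUpdate (xs : ℕ → XVec N K) (r : ℕ) (i : Fin K) :
    hibsaW xs r i = prefixUpdate (xs r) (xs (r + 1)) i :=
  rfl

theorem prefixUpdate_zero (x x' : XVec N K) : prefixUpdate x x' 0 = x := by
  ext1 j; simp [prefixUpdate]

theorem prefixUpdate_card (x x' : XVec N K) : prefixUpdate x x' K = x' := by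
  ext1 j; simp [prefixUpdate]

theorem prefixUpdate_apply_self (x x' : XVec N K) (i : Fin K) : prefixUpdate x x' i i = x i := by
  simp [prefixUpdate]

theorem prefixUpdate_succ (x x' : XVec N K) (i : Fin K) :
    prefixUpdate x x' (i + 1) = blockUpdate (prefixUpdate x x' i) i (x' i) := by
  ext1 j
  rcases eq_or_ne j i with rfl | hj
  · simp [prefixUpdate, blockUpdate]
  · simp [prefixUpdate, blockUpdate, hj, hj.le_iff_lt]

theorem prefixUpdate_mem {Xi : Fin K → Set (Blk N)} {x x' : XVec N K}
    (hx : ∀ j, x j ∈ Xi j) (hx' : ∀ j, x' j ∈ Xi j) (n : ℕ) (j : Fin K) :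
    prefixUpdate x x' n j ∈ Xi j := by
  by_cases hj : (j : ℕ) < n <;> simp [prefixUpdate, hj, hx, hx']

theorem sum_sub_prefixUpdate (F : XVec N K → ℝ) (x x' : XVec N K) :
    ∑ i : Fin K, (F (prefixUpdate x x' (i + 1)) - F (prefixUpdate x x' i)) = F x' - F x := by
  rw [Fin.sum_univ_eq_sum_range (fun n => F (prefixUpdate x x' (n + 1)) - F (prefixUpdate x x' n)),
    Finset.sum_range_sub (fun n => F (prefixUpdate x x' n)), prefixUpdate_card, prefixUpdate_zero]

end PrefixUpdate

theorem hibsa_descent_x_general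
    {N K M : ℕ}
    -- Assumption A
    (f : XVec N K → YVec M → ℝ)
    (Xi : Fin K → Set (Blk N)) (hXiconv : ∀ i, Convex ℝ (Xi i))
    (Y : Set (YVec M))
    (h : Fin K → Blk N → ℝ) (hhconv : ∀ i, ConvexOn ℝ Set.univ (h i))
    (g : YVec M → ℝ)
    (Gfx : XVec N K → YVec M → XVec N K)
    (hGfx : ∀ x y, HasGradientAt (fun z => f z y) (Gfx x y) x)
    (Gfy : XVec N K → YVec M → YVec M)
    (Lx : Fin K → ℝ)
    (hLx : ∀ (i : Fin K) (y : YVec M), y ∈ Y → ∀ x x' : XVec N K,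
      (∀ j, x j ∈ Xi j) → (∀ j, x' j ∈ Xi j) →
      ‖Gfx x' y i - Gfx x y i‖ ≤ Lx i * ‖x' - x‖)
    -- Assumption B
    (U : Fin K → Blk N → XVec N K → YVec M → ℝ)
    (GU : Fin K → Blk N → XVec N K → YVec M → Blk N)
    (hGU : ∀ i z w y, HasGradientAt (fun u => U i u w y) (GU i z w y) z)
    (μ : Fin K → ℝ)
    (hB1 : ∀ (i : Fin K) (w : XVec N K) (y : YVec M), y ∈ Y →
      ∀ z z' : Blk N, z ∈ Xi i → z' ∈ Xi i →
      ⟪GU i z' w y, z - z'⟫ + μ i / 2 * ‖z - z'‖ ^ 2 ≤ U i z w y - U i z' w y)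
    (hB2 : ∀ (i : Fin K) (x : XVec N K) (y : YVec M),
      (∀ j, x j ∈ Xi j) → y ∈ Y → GU i (x i) x y = Gfx x y i)
    -- HiBSA iterates (strongly concave case: γ^r = 0, β^r = β)
    (ρ β : ℝ)
    (xs : ℕ → XVec N K) (ys : ℕ → YVec M)
    (hx0 : ∀ j, xs 0 j ∈ Xi j) (hy0 : ys 0 ∈ Y)
    (hxup : ∀ (r : ℕ) (i : Fin K),
      xs (r + 1) i ∈ Xi i ∧
      ∀ z ∈ Xi i,
        U i (xs (r + 1) i) (hibsaW xs r i) (ys r) + h i (xs (r + 1) i)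
            + β / 2 * ‖xs (r + 1) i - xs r i‖ ^ 2
          ≤ U i z (hibsaW xs r i) (ys r) + h i z + β / 2 * ‖z - xs r i‖ ^ 2)
    (hyup : ∀ r : ℕ,
      ys (r + 1) ∈ Y ∧
      ∀ u ∈ Y,
        ⟪Gfy (xs (r + 1)) (ys r), u - ys r⟫ - 1 / (2 * ρ) * ‖u - ys r‖ ^ 2 - g u
          ≤ ⟪Gfy (xs (r + 1)) (ys r), ys (r + 1) - ys r⟫
              - 1 / (2 * ρ) * ‖ys (r + 1) - ys r‖ ^ 2 - g (ys (r + 1))) :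
    -- conclusion: descent estimate on the x-blocks
    ∀ r : ℕ,
      (f (xs (r + 1)) (ys r) + ∑ i, h i (xs (r + 1) i) - g (ys r))
          - (f (xs r) (ys r) + ∑ i, h i (xs r i) - g (ys r))
        ≤ -∑ i, (β + μ i - Lx i / 2) * ‖xs (r + 1) i - xs r i‖ ^ 2 := by
  intro r
  have hxs : ∀ s j, xs s j ∈ Xi j
    | 0 => hx0
    | n + 1 => fun j => (hxup n j).1
  have hys : ∀ s, ys s ∈ Y
    | 0 => hy0
    | n + 1 => (hyup n).1
  set P := prefixUpdate (xs r) (xs (r + 1))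
  have hP := prefixUpdate_mem (hxs r) (hxs (r + 1))
  have hblock (i : Fin K) :
      f (P (i + 1)) (ys r) + h i (xs (r + 1) i) - (f (P i) (ys r) + h i (xs r i))
        ≤ -((β + μ i - Lx i / 2) * ‖xs (r + 1) i - xs r i‖ ^ 2) := by
    have hmin : IsMinOn (fun u => U i u (P i) (ys r) + h i u + β / 2 * ‖u - P i i‖ ^ 2) (Xi i)
        (xs (r + 1) i) :=
      isMinOn_iff.2 <| by
        simpa only [P, prefixUpdate_apply_self, hibsaW_eq_prefixUpdate] using (hxup r i).2
    have := block_descent_of_isMinOn_proximal hXiconv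
      ((hhconv i).subset (subset_univ _) (hXiconv i)) (hGfx · (ys r)) (hLx i (ys r) (hys r))
      (hGU i _ _ _) (hB1 i _ _ (hys r)) (hB2 i _ _ (hP i) (hys r)) (hP i) (hxup r i).1 hmin
    rwa [← prefixUpdate_succ, prefixUpdate_apply_self] at this
  have htel := sum_sub_prefixUpdate (f · (ys r)) (xs r) (xs (r + 1))
  calc _ = ∑ i : Fin K, (f (P (i + 1)) (ys r) - f (P i) (ys r))
        + ∑ i, (h i (xs (r + 1) i) - h i (xs r i)) := by
        rw [htel, Finset.sum_sub_distrib]; ring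
    _ = ∑ i : Fin K, (f (P (i + 1)) (ys r) + h i (xs (r + 1) i)
        - (f (P i) (ys r) + h i (xs r i))) := by
        rw [← Finset.sum_add_distrib]; exact Finset.sum_congr rfl fun i _ => by ring
    _ ≤ _ := (Finset.sum_le_sum fun i _ => hblock i).trans_eq (Finset.sum_neg_distrib _)

/-- **Lemma 1 (descent on `x`)** for HiBSA in the strongly concave case: under
Assumptions A, B, C-1, with `γ^r = 0` and constant `β^r = β > 0`,
`ℓ(x^{r+1}, y^r) − ℓ(x^r, y^r) ≤ −Σᵢ (β + μᵢ − L_{xᵢ}/2) ‖x_i^{r+1} − x_i^r‖²`,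
where `ℓ(x,y) = f(x,y) + Σᵢ hᵢ(xᵢ) − g(y)`. -/
theorem hibsa_descent_x
    {N K M : ℕ}
    -- Assumption A
    (f : XVec N K → YVec M → ℝ)
    (Xi : Fin K → Set (Blk N)) (hXiconv : ∀ i, Convex ℝ (Xi i))
    (hXicomp : ∀ i, IsCompact (Xi i))
    (Y : Set (YVec M)) (hYconv : Convex ℝ Y) (hYcomp : IsCompact Y)
    (h : Fin K → Blk N → ℝ) (hhconv : ∀ i, ConvexOn ℝ Set.univ (h i))
    (g : YVec M → ℝ) (hgconv : ConvexOn ℝ Set.univ g)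
    (Gfx : XVec N K → YVec M → XVec N K)
    (hGfx : ∀ x y, HasGradientAt (fun z => f z y) (Gfx x y) x)
    (Gfy : XVec N K → YVec M → YVec M)
    (hGfy : ∀ x y, HasGradientAt (fun z => f x z) (Gfy x y) y)
    (Lx : Fin K → ℝ)
    (hLx : ∀ (i : Fin K) (y : YVec M), y ∈ Y → ∀ x x' : XVec N K,
      (∀ j, x j ∈ Xi j) → (∀ j, x' j ∈ Xi j) →
      ‖Gfx x' y i - Gfx x y i‖ ≤ Lx i * ‖x' - x‖)
    (Ly : ℝ)
    (hLy : ∀ (x x' : XVec N K) (y y' : YVec M),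
      (∀ j, x j ∈ Xi j) → (∀ j, x' j ∈ Xi j) → y ∈ Y → y' ∈ Y →
      ‖Gfy x' y' - Gfy x y‖ ≤ Ly * Real.sqrt (‖x' - x‖ ^ 2 + ‖y' - y‖ ^ 2))
    -- Assumption B
    (U : Fin K → Blk N → XVec N K → YVec M → ℝ)
    (GU : Fin K → Blk N → XVec N K → YVec M → Blk N)
    (hGU : ∀ i z w y, HasGradientAt (fun u => U i u w y) (GU i z w y) z)
    (μ : Fin K → ℝ) (hμpos : ∀ i, 0 < μ i)
    (hB1 : ∀ (i : Fin K) (w : XVec N K) (y : YVec M), y ∈ Y →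
      ∀ z z' : Blk N, z ∈ Xi i → z' ∈ Xi i →
      ⟪GU i z' w y, z - z'⟫ + μ i / 2 * ‖z - z'‖ ^ 2 ≤ U i z w y - U i z' w y)
    (hB2 : ∀ (i : Fin K) (x : XVec N K) (y : YVec M),
      (∀ j, x j ∈ Xi j) → y ∈ Y → GU i (x i) x y = Gfx x y i)
    (hB3 : ∀ (i : Fin K) (x : XVec N K) (y : YVec M),
      (∀ j, x j ∈ Xi j) → y ∈ Y →
      (∀ z ∈ Xi i, f (blockUpdate x i z) y ≤ U i z x y) ∧ U i (x i) x y = f x y)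
    (Lu : Fin K → ℝ)
    (hB4 : ∀ (i : Fin K) (w : XVec N K) (y : YVec M) (z z' : Blk N),
      ‖GU i z w y - GU i z' w y‖ ≤ Lu i * ‖z - z'‖)
    -- Assumption C-1 (θ-strong concavity in y)
    (θ : ℝ) (hθ : 1 < θ)
    (hC1 : ∀ (x : XVec N K) (y z : YVec M), (∀ j, x j ∈ Xi j) → y ∈ Y → z ∈ Y →
      f x z - f x y ≤ ⟪Gfy x y, z - y⟫ - θ / 2 * ‖z - y‖ ^ 2)
    -- HiBSA iterates (strongly concave case: γ^r = 0, β^r = β)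
    (ρ β : ℝ) (hρ : 0 < ρ) (hβ : 0 < β)
    (xs : ℕ → XVec N K) (ys : ℕ → YVec M)
    (hx0 : ∀ j, xs 0 j ∈ Xi j) (hy0 : ys 0 ∈ Y)
    (hxup : ∀ (r : ℕ) (i : Fin K),
      xs (r + 1) i ∈ Xi i ∧
      ∀ z ∈ Xi i,
        U i (xs (r + 1) i) (hibsaW xs r i) (ys r) + h i (xs (r + 1) i)
            + β / 2 * ‖xs (r + 1) i - xs r i‖ ^ 2
          ≤ U i z (hibsaW xs r i) (ys r) + h i z + β / 2 * ‖z - xs r i‖ ^ 2)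
    (hyup : ∀ r : ℕ,
      ys (r + 1) ∈ Y ∧
      ∀ u ∈ Y,
        ⟪Gfy (xs (r + 1)) (ys r), u - ys r⟫ - 1 / (2 * ρ) * ‖u - ys r‖ ^ 2 - g u
          ≤ ⟪Gfy (xs (r + 1)) (ys r), ys (r + 1) - ys r⟫
              - 1 / (2 * ρ) * ‖ys (r + 1) - ys r‖ ^ 2 - g (ys (r + 1))) :
    -- conclusion: descent estimate on the x-blocks
    ∀ r : ℕ,
      (f (xs (r + 1)) (ys r) + ∑ i, h i (xs (r + 1) i) - g (ys r))
          - (f (xs r) (ys r) + ∑ i, h i (xs r i) - g (ys r))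
        ≤ -∑ i, (β + μ i - Lx i / 2) * ‖xs (r + 1) i - xs r i‖ ^ 2 :=
  hibsa_descent_x_general f Xi hXiconv Y h hhconv g Gfx hGfx Gfy Lx hLx U GU hGU μ hB1 hB2 ρ β xs ys
    hx0 hy0 hxup hyup
end

section
/- Suppose Assumptions A, B and C-2 hold and let (x^r, y^r) be generated by HiBSA (concave case) with γ^r > 0 and β^r > L_{x_i} for all r and i. Then for every r ≥ 1 (where y^r is itself produced by the regularized y-update with parameter γ^{r−1} from (x^r, y^{r−1})), ℓ(x^{r+1}, y^{r+1}) − ℓ(x^r, y^r) ≤ (1/(2ρ))‖y^r − y^{r−1}‖² − (β^r/2 + μ − ρL_y²/2)‖x^{r+1} − x^r‖² − (γ^{r−1}/2 − 1/ρ)‖y^{r+1} − y^r‖² + (γ^r/2)‖y^{r+1}‖² − (γ^{r−1}/2)‖y^r‖² + ((γ^{r−1} − γ^r)/2)‖y^{r+1}‖², where μ := min_{i} μ_i. -/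
open scoped RealInnerProductSpace

/-!
Each block step of the `x`-sweep is a proximal step on the strongly convex surrogate `Uᵢ`.
Its optimality condition, the strong convexity of `Uᵢ` and the block descent lemma for
`∇_{xᵢ} f` (tightness and gradient consistency make `Uᵢ` and `f` agree to first order at
`w_i^{r+1}`) decrease `ℓ(·, y^r)` by `(β^r + μᵢ − L_{xᵢ}/2)‖x_i^{r+1} − x_i^r‖²
≥ (β^r/2 + μ)‖x_i^{r+1} − x_i^r‖²`, and these decreases telescope along the sweep.
For the `y`-step, concavity bounds `f(x^{r+1}, y^{r+1}) − f(x^{r+1}, y^r)` by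
`⟪∇_y f(x^{r+1}, y^r), y^{r+1} − y^r⟫`. The optimality condition of the previous regularized
`y`-update controls this inner product with `∇_y f(x^r, y^r)` in its place, and the
remaining gradient difference costs `ρL_y²/2 ‖x^{r+1} − x^r‖²` by Lipschitz continuity and
Young's inequality.
-/

open Set

theorem image_one_le_of_deriv_sub_le {ψ ψ' : ℝ → ℝ} {C : ℝ} (hψ : ∀ t, HasDerivAt ψ (ψ' t) t)
    (hC : ∀ t ∈ Ioo (0 : ℝ) 1, ψ' t - ψ' 0 ≤ C * t) : ψ 1 ≤ ψ 0 + ψ' 0 + C / 2 := by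
  set H : ℝ → ℝ := fun t => ψ' 0 * t + C / 2 * t ^ 2 - ψ t
  have hH : ∀ t, HasDerivAt H (ψ' 0 + C * t - ψ' t) t := fun t => by
    refine (((hasDerivAt_id' t).const_mul (ψ' 0)).fun_add
      ((hasDerivAt_pow 2 t).const_mul (C / 2))).fun_sub (hψ t) |>.congr_deriv ?_
    push_cast; ring
  have hmono : MonotoneOn H (Icc 0 1) := by
    refine monotoneOn_of_hasDerivWithinAt_nonneg (convex_Icc 0 1)
      (fun t _ => (hH t).continuousAt.continuousWithinAt) (fun t _ => (hH t).hasDerivWithinAt) ?_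
    intro t ht
    rw [interior_Icc] at ht
    linarith [hC t ht]
  have hH01 := hmono (left_mem_Icc.2 zero_le_one) (right_mem_Icc.2 zero_le_one) zero_le_one
  simp only [H] at hH01
  linarith

theorem IsMinOn.hasFDerivAt_add_convexOn_nonneg {E : Type*} [NormedAddCommGroup E]
    [NormedSpace ℝ E] {ψ g : E → ℝ} {ψ' : E →L[ℝ] ℝ} {S : Set E} {a u : E}
    (hmin : IsMinOn (fun v => ψ v + g v) S a) (hψ : HasFDerivAt ψ ψ' a)
    (hg : ConvexOn ℝ S g) (ha : a ∈ S) (hu : u ∈ S) :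
    0 ≤ ψ' (u - a) + (g u - g a) := by
  -- On the segment `[a, u]` the nonsmooth `g` lies below its chord, which is differentiable.
  set φ : ℝ → ℝ := fun t => ψ (a + t • (u - a)) + t * (g u - g a)
  have hφ : HasDerivAt φ (ψ' (u - a) + (g u - g a)) 0 := by
    have hpath : HasDerivAt (fun t : ℝ => a + t • (u - a)) (u - a) 0 :=
      ((hasDerivAt_id 0).smul_const (u - a)).const_add a |>.congr_deriv (one_smul ℝ _)
    refine HasDerivAt.add ?_ ((hasDerivAt_id 0).mul_const _ |>.congr_deriv (one_mul _))
    exact (by simpa using hψ : HasFDerivAt ψ ψ' (a + (0 : ℝ) • (u - a))).comp_hasDerivAt 0 hpath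
  have hφmin : IsMinOn φ (Icc 0 1) 0 := by
    intro t ⟨ht0, ht1⟩
    have hseg : a + t • (u - a) = (1 - t) • a + t • u := by module
    have hmem : a + t • (u - a) ∈ S := hseg ▸ hg.1 ha hu (sub_nonneg.2 ht1) ht0 (by ring)
    have hgseg : g (a + t • (u - a)) ≤ (1 - t) * g a + t * g u :=
      hseg ▸ hg.2 ha hu (sub_nonneg.2 ht1) ht0 (by ring)
    have hle : ψ a + g a ≤ ψ (a + t • (u - a)) + g (a + t • (u - a)) := hmin hmem
    simp only [φ, mem_ofPred_eq, zero_smul, add_zero, zero_mul]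
    linarith
  have hcone : (1 : ℝ) ∈ posTangentConeAt (Icc 0 1) 0 :=
    mem_posTangentConeAt_of_segment_subset (by simp [segment_eq_Icc])
  simpa using hφmin.localize.hasFDerivWithinAt_nonneg
    hφ.hasFDerivAt.hasFDerivWithinAt hcone

section InnerProductSpace

variable {E : Type*} [NormedAddCommGroup E] [InnerProductSpace ℝ E]

theorem hasFDerivAt_norm_sub_sq (a b : E) :
    HasFDerivAt (fun z => ‖z - a‖ ^ 2) (2 • innerSL ℝ (b - a)) b := by
  simpa using ((hasFDerivAt_id b).sub_const a).norm_sq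

theorem IsMinOn.proximal_step_le [CompleteSpace E] {φ h : E → ℝ} {S : Set E} {G a b : E}
    {μ β : ℝ} (hmin : IsMinOn (fun z => φ z + β / 2 * ‖z - a‖ ^ 2 + h z) S b)
    (hφ : HasGradientAt φ G b) (hsc : ⟪G, a - b⟫ + μ / 2 * ‖a - b‖ ^ 2 ≤ φ a - φ b)
    (hh : ConvexOn ℝ S h) (ha : a ∈ S) (hb : b ∈ S) :
    φ b + h b ≤ φ a + h a - (β + μ / 2) * ‖b - a‖ ^ 2 := by
  have hvi := hmin.hasFDerivAt_add_convexOn_nonneg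
    (hφ.hasFDerivAt.add ((hasFDerivAt_norm_sub_sq a b).const_mul (β / 2))) hh hb ha
  have hinner : ⟪b - a, a - b⟫ = -‖b - a‖ ^ 2 := by
    rw [← neg_sub b a, inner_neg_right, real_inner_self_eq_norm_sq]
  simp only [add_apply, smul_apply, InnerProductSpace.toDual_apply_apply, innerSL_apply_apply,
    hinner, smul_eq_mul, nsmul_eq_mul, Nat.cast_ofNat] at hvi
  rw [norm_sub_rev] at hsc
  linarith

theorem IsMaxOn.inner_le_of_regularized [CompleteSpace E] {φ g : E → ℝ} {S : Set E}
    {G ym y u : E} {ρ γ : ℝ}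
    (hmax : IsMaxOn (fun v => φ v - g v - 1 / (2 * ρ) * ‖v - ym‖ ^ 2 - γ / 2 * ‖v‖ ^ 2) S y)
    (hφ : HasGradientAt φ G y) (hg : ConvexOn ℝ S g) (hy : y ∈ S) (hu : u ∈ S) :
    ⟪G, u - y⟫ ≤ g u - g y + 1 / ρ * ⟪y - ym, u - y⟫ + γ * ⟪y, u - y⟫ := by
  have hmin : IsMinOn (fun v => (-φ v + 1 / (2 * ρ) * ‖v - ym‖ ^ 2 + γ / 2 * ‖v - 0‖ ^ 2) + g v)
      S y := fun v hv => by
    have hle := hmax hv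
    simp only [mem_ofPred_eq, sub_zero] at hle ⊢
    linarith
  have hvi := hmin.hasFDerivAt_add_convexOn_nonneg
    ((hφ.hasFDerivAt.neg.add ((hasFDerivAt_norm_sub_sq ym y).const_mul (1 / (2 * ρ)))).add
      ((hasFDerivAt_norm_sub_sq 0 y).const_mul (γ / 2))) hg hy hu
  simp only [add_apply, smul_apply, neg_apply, InnerProductSpace.toDual_apply_apply,
    innerSL_apply_apply, smul_eq_mul, nsmul_eq_mul, Nat.cast_ofNat, sub_zero] at hvi
  linear_combination hvi

end InnerProductSpace

theorem mul_le_half_mul_sq_add {a b ρ : ℝ} (hρ : 0 < ρ) :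
    a * b ≤ ρ / 2 * a ^ 2 + 1 / (2 * ρ) * b ^ 2 := by
  have hsq : 0 ≤ (ρ * a - b) ^ 2 / (2 * ρ) := by positivity
  have e : (ρ * a - b) ^ 2 / (2 * ρ) = ρ / 2 * a ^ 2 + 1 / (2 * ρ) * b ^ 2 - a * b := by
    field_simp; ring
  linarith

theorem regularized_ascent_bound {E : Type*} [NormedAddCommGroup E] [InnerProductSpace ℝ E]
    {ρ γ L δ Δf Δg : ℝ} {G G' ym y u : E} (hρ : 0 < ρ)
    (hconc : Δf ≤ ⟪G', u - y⟫)
    (hvi : ⟪G, u - y⟫ ≤ Δg + 1 / ρ * ⟪y - ym, u - y⟫ + γ * ⟪y, u - y⟫)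
    (hlip : ‖G' - G‖ ≤ L * δ) :
    Δf - Δg ≤ 1 / (2 * ρ) * ‖y - ym‖ ^ 2 + ρ * L ^ 2 / 2 * δ ^ 2
      - (γ / 2 - 1 / ρ) * ‖u - y‖ ^ 2 + γ / 2 * (‖u‖ ^ 2 - ‖y‖ ^ 2) := by
  have hgrad : ⟪G' - G, u - y⟫ ≤ ρ * L ^ 2 / 2 * δ ^ 2 + 1 / (2 * ρ) * ‖u - y‖ ^ 2 :=
    calc ⟪G' - G, u - y⟫ ≤ ‖G' - G‖ * ‖u - y‖ := real_inner_le_norm _ _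
      _ ≤ (L * δ) * ‖u - y‖ := by gcongr
      _ ≤ ρ / 2 * (L * δ) ^ 2 + 1 / (2 * ρ) * ‖u - y‖ ^ 2 := mul_le_half_mul_sq_add hρ
      _ = _ := by ring
  have hprox : 1 / ρ * ⟪y - ym, u - y⟫ ≤ 1 / (2 * ρ) * (‖y - ym‖ ^ 2 + ‖u - y‖ ^ 2) :=
    calc 1 / ρ * ⟪y - ym, u - y⟫ ≤ 1 / ρ * (‖y - ym‖ * ‖u - y‖) := by
          gcongr; exact real_inner_le_norm _ _
      _ ≤ 1 / ρ * ((‖y - ym‖ ^ 2 + ‖u - y‖ ^ 2) / 2) := by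
          gcongr; nlinarith [two_mul_le_add_sq ‖y - ym‖ ‖u - y‖]
      _ = _ := by ring
  have hpolar : 2 * ⟪y, u - y⟫ = ‖u‖ ^ 2 - ‖y‖ ^ 2 - ‖u - y‖ ^ 2 := by
    rw [inner_sub_right, real_inner_self_eq_norm_sq, norm_sub_sq_real, real_inner_comm]; ring
  rw [inner_sub_left] at hgrad
  linear_combination hconc + hvi + hgrad + hprox + γ / 2 * hpolar

theorem PiLp.inner_single_right {ι : Type*} [Fintype ι] [DecidableEq ι] {β : ι → Type*}
    [∀ i, NormedAddCommGroup (β i)] [∀ i, InnerProductSpace ℝ (β i)]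
    (v : PiLp 2 β) (i : ι) (a : β i) : ⟪v, PiLp.single 2 i a⟫ = ⟪v i, a⟫ := by
  rw [PiLp.inner_apply, Fintype.sum_eq_single i fun j hj => by simp [PiLp.single_eq_of_ne 2 hj]]
  simp [PiLp.single_eq_same]

theorem blockUpdate_eq_add_single {N K : ℕ} (w : XVec N K) (i : Fin K) (z : Blk N) :
    blockUpdate w i z = w + PiLp.single 2 i (z - w i) := by
  ext j : 1
  by_cases hj : j = i
  · subst hj; simp [blockUpdate]
  · simp [blockUpdate, hj]

theorem blockUpdate_descent {N K M : ℕ} {f : XVec N K → YVec M → ℝ} {Xi : Fin K → Set (Blk N)}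
    {Gfx : XVec N K → YVec M → XVec N K} {L : ℝ} {i : Fin K} {w : XVec N K} {y : YVec M}
    {b : Blk N} (hXi : Convex ℝ (Xi i))
    (hGfx : ∀ x, HasGradientAt (fun z => f z y) (Gfx x y) x)
    (hL : ∀ x, (∀ j, x j ∈ Xi j) → ‖Gfx x y i - Gfx w y i‖ ≤ L * ‖x - w‖)
    (hw : ∀ j, w j ∈ Xi j) (hb : b ∈ Xi i) :
    f (blockUpdate w i b) y ≤ f w y + ⟪Gfx w y i, b - w i⟫ + L / 2 * ‖b - w i‖ ^ 2 := by
  set e : XVec N K := PiLp.single 2 i (b - w i)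
  have hderiv : ∀ t : ℝ, HasDerivAt (fun t : ℝ => f (w + t • e) y)
      ⟪Gfx (w + t • e) y i, b - w i⟫ t := fun t => by
    have hpath := ((hasDerivAt_id t).smul_const e).const_add w
    have hcomp := (hGfx (w + t • e)).hasFDerivAt.comp_hasDerivAt t hpath
    simp only [one_smul, InnerProductSpace.toDual_apply_apply, e,
      PiLp.inner_single_right] at hcomp
    exact hcomp
  have hlip : ∀ t ∈ Ioo (0 : ℝ) 1,
      ⟪Gfx (w + t • e) y i, b - w i⟫ - ⟪Gfx (w + (0 : ℝ) • e) y i, b - w i⟫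
        ≤ L * ‖b - w i‖ ^ 2 * t := by
    intro t ⟨ht0, ht1⟩
    have hmem : ∀ j, (w + t • e) j ∈ Xi j := by
      intro j
      by_cases hj : j = i
      · subst hj
        have hseg : w j + t • (b - w j) = (1 - t) • w j + t • b := by module
        simpa [e, hseg] using hXi (hw j) hb (by linarith) ht0.le (by ring)
      · simpa [e, hj] using hw j
    calc _ = ⟪Gfx (w + t • e) y i - Gfx w y i, b - w i⟫ := by simp [inner_sub_left]
      _ ≤ ‖Gfx (w + t • e) y i - Gfx w y i‖ * ‖b - w i‖ := real_inner_le_norm _ _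
      _ ≤ L * ‖(w + t • e) - w‖ * ‖b - w i‖ := by gcongr; exact hL _ hmem
      _ = L * ‖b - w i‖ ^ 2 * t := by
        simp only [add_sub_cancel_left, norm_smul, Real.norm_eq_abs, abs_of_pos ht0,
          PiLp.norm_single, e]
        ring
  have hsegment := image_one_le_of_deriv_sub_le hderiv hlip
  simp only [one_smul, zero_smul, add_zero] at hsegment
  rw [blockUpdate_eq_add_single]
  linarith

theorem blockUpdate_proximal_step_le {N K M : ℕ} {f : XVec N K → YVec M → ℝ}
    {Xi : Fin K → Set (Blk N)} {Gfx : XVec N K → YVec M → XVec N K} {u hi : Blk N → ℝ}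
    {Gu : Blk N → Blk N} {L μ β : ℝ} {i : Fin K} {w : XVec N K} {y : YVec M} {b : Blk N}
    (hXi : Convex ℝ (Xi i))
    (hGfx : ∀ x, HasGradientAt (fun z => f z y) (Gfx x y) x)
    (hL : ∀ x, (∀ j, x j ∈ Xi j) → ‖Gfx x y i - Gfx w y i‖ ≤ L * ‖x - w‖)
    (hGu : HasGradientAt u (Gu b) b)
    (hsc : ∀ z z', z ∈ Xi i → z' ∈ Xi i → ⟪Gu z', z - z'⟫ + μ / 2 * ‖z - z'‖ ^ 2 ≤ u z - u z')
    (hcons : Gu (w i) = Gfx w y i) (htight : u (w i) = f w y) (hhi : ConvexOn ℝ (Xi i) hi)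
    (hmin : IsMinOn (fun z => u z + β / 2 * ‖z - w i‖ ^ 2 + hi z) (Xi i) b)
    (hw : ∀ j, w j ∈ Xi j) (hb : b ∈ Xi i) :
    f (blockUpdate w i b) y + hi b ≤ f w y + hi (w i) - (β + μ - L / 2) * ‖b - w i‖ ^ 2 := by
  have hdescent := blockUpdate_descent hXi hGfx hL hw hb
  have hprox := hmin.proximal_step_le hGu (hsc _ _ (hw i) hb) hhi (hw i) hb
  have hupper := hsc _ _ hb (hw i)
  rw [hcons, htight] at hupper
  rw [htight] at hprox
  linarith

noncomputable def partialSweep {N K : ℕ} (xs : ℕ → XVec N K) (r k : ℕ) : XVec N K :=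
  WithLp.toLp 2 (fun j : Fin K => if (j : ℕ) < k then xs (r + 1) j else xs r j)

section Sweep

variable {N K : ℕ} (xs : ℕ → XVec N K) (r : ℕ)

theorem partialSweep_zero : partialSweep xs r 0 = xs r := by
  ext j : 1; simp [partialSweep]

theorem partialSweep_card : partialSweep xs r K = xs (r + 1) := by
  ext j : 1; simp [partialSweep]

theorem hibsaW_eq_partialSweep (i : Fin K) : hibsaW xs r i = partialSweep xs r i := rfl

theorem hibsaW_apply_self (i : Fin K) : hibsaW xs r i i = xs r i := by
  simp [hibsaW]

theorem blockUpdate_partialSweep (i : Fin K) :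
    blockUpdate (partialSweep xs r i) i (xs (r + 1) i) = partialSweep xs r (i + 1) := by
  ext j : 1
  by_cases hj : j = i
  · subst hj; simp [blockUpdate, partialSweep]
  · simp [blockUpdate, partialSweep, hj, le_iff_lt_or_eq, Fin.val_inj]

theorem hibsaW_mem {Xi : Fin K → Set (Blk N)} (hxr : ∀ j, xs r j ∈ Xi j)
    (hxr1 : ∀ j, xs (r + 1) j ∈ Xi j) (i j : Fin K) : hibsaW xs r i j ∈ Xi j := by
  simp only [hibsaW, PiLp.toLp_apply]
  split_ifs
  exacts [hxr1 j, hxr j]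

theorem sum_blockUpdate_hibsaW_sub (F : XVec N K → ℝ) :
    ∑ i : Fin K, (F (blockUpdate (hibsaW xs r i) i (xs (r + 1) i)) - F (hibsaW xs r i))
      = F (xs (r + 1)) - F (xs r) := by
  simp only [hibsaW_eq_partialSweep, blockUpdate_partialSweep]
  rw [Fin.sum_univ_eq_sum_range (fun k => F (partialSweep xs r (k + 1)) - F (partialSweep xs r k)),
    Finset.sum_range_sub (fun k => F (partialSweep xs r k)), partialSweep_card, partialSweep_zero]

end Sweep

theorem hibsa_sweep_descent {N K M : ℕ} {f : XVec N K → YVec M → ℝ}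
    {Xi : Fin K → Set (Blk N)} {Gfx : XVec N K → YVec M → XVec N K}
    {U : Fin K → Blk N → XVec N K → YVec M → ℝ}
    {GU : Fin K → Blk N → XVec N K → YVec M → Blk N} {h : Fin K → Blk N → ℝ}
    {Lx μ : Fin K → ℝ} {μmin β : ℝ} {xs : ℕ → XVec N K} {r : ℕ} {y : YVec M}
    (hXi : ∀ i, Convex ℝ (Xi i))
    (hGfx : ∀ x, HasGradientAt (fun z => f z y) (Gfx x y) x)
    (hLx : ∀ i x x', (∀ j, x j ∈ Xi j) → (∀ j, x' j ∈ Xi j) →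
      ‖Gfx x' y i - Gfx x y i‖ ≤ Lx i * ‖x' - x‖)
    (hGU : ∀ i z w, HasGradientAt (fun u => U i u w y) (GU i z w y) z)
    (hsc : ∀ i w z z', z ∈ Xi i → z' ∈ Xi i →
      ⟪GU i z' w y, z - z'⟫ + μ i / 2 * ‖z - z'‖ ^ 2 ≤ U i z w y - U i z' w y)
    (hcons : ∀ i x, (∀ j, x j ∈ Xi j) → GU i (x i) x y = Gfx x y i)
    (htight : ∀ i x, (∀ j, x j ∈ Xi j) → U i (x i) x y = f x y)
    (hh : ∀ i, ConvexOn ℝ (Xi i) (h i))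
    (hmin : ∀ i, IsMinOn (fun z => U i z (hibsaW xs r i) y + β / 2 * ‖z - xs r i‖ ^ 2 + h i z)
      (Xi i) (xs (r + 1) i))
    (hμ : ∀ i, μmin ≤ μ i) (hβ : ∀ i, Lx i ≤ β)
    (hxr : ∀ j, xs r j ∈ Xi j) (hxr1 : ∀ j, xs (r + 1) j ∈ Xi j) :
    f (xs (r + 1)) y + ∑ i, h i (xs (r + 1) i)
      ≤ f (xs r) y + ∑ i, h i (xs r i) - (β / 2 + μmin) * ‖xs (r + 1) - xs r‖ ^ 2 := by
  have hblock : ∀ i, f (blockUpdate (hibsaW xs r i) i (xs (r + 1) i)) y - f (hibsaW xs r i) y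
      ≤ h i (xs r i) - h i (xs (r + 1) i) - (β / 2 + μmin) * ‖xs (r + 1) i - xs r i‖ ^ 2 := by
    intro i
    have hw := hibsaW_mem xs r hxr hxr1 i
    have hstep := blockUpdate_proximal_step_le (β := β) (hXi i) hGfx
      (fun x hx => hLx i _ x hw hx) (hGU i _ _) (hsc i _) (hcons i _ hw) (htight i _ hw) (hh i)
      (by rw [hibsaW_apply_self]; exact hmin i) hw (hxr1 i)
    rw [hibsaW_apply_self] at hstep
    have hcoef : β / 2 + μmin ≤ β + μ i - Lx i / 2 := by linarith [hμ i, hβ i]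
    linarith [mul_le_mul_of_nonneg_right hcoef (sq_nonneg ‖xs (r + 1) i - xs r i‖)]
  have hsum := Finset.sum_le_sum fun i (_ : i ∈ Finset.univ) => hblock i
  rw [sum_blockUpdate_hibsaW_sub xs r (f · y), Finset.sum_sub_distrib, Finset.sum_sub_distrib,
    ← Finset.mul_sum] at hsum
  rw [PiLp.norm_sq_eq_of_L2]
  simp only [PiLp.sub_apply]
  linarith

theorem hibsa_descent_concave_general
    {N K M : ℕ}
    -- Assumption A
    (f : XVec N K → YVec M → ℝ)
    (Xi : Fin K → Set (Blk N)) (hXiconv : ∀ i, Convex ℝ (Xi i))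
    (Y : Set (YVec M)) (hYconv : Convex ℝ Y)
    (h : Fin K → Blk N → ℝ) (hhconv : ∀ i, ConvexOn ℝ Set.univ (h i))
    (g : YVec M → ℝ) (hgconv : ConvexOn ℝ Set.univ g)
    (Gfx : XVec N K → YVec M → XVec N K)
    (hGfx : ∀ x y, HasGradientAt (fun z => f z y) (Gfx x y) x)
    (Gfy : XVec N K → YVec M → YVec M)
    (hGfy : ∀ x y, HasGradientAt (fun z => f x z) (Gfy x y) y)
    (Lx : Fin K → ℝ)
    (hLx : ∀ (i : Fin K) (y : YVec M), y ∈ Y → ∀ x x' : XVec N K,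
      (∀ j, x j ∈ Xi j) → (∀ j, x' j ∈ Xi j) →
      ‖Gfx x' y i - Gfx x y i‖ ≤ Lx i * ‖x' - x‖)
    (Ly : ℝ)
    (hLy : ∀ (x x' : XVec N K) (y y' : YVec M),
      (∀ j, x j ∈ Xi j) → (∀ j, x' j ∈ Xi j) → y ∈ Y → y' ∈ Y →
      ‖Gfy x' y' - Gfy x y‖ ≤ Ly * Real.sqrt (‖x' - x‖ ^ 2 + ‖y' - y‖ ^ 2))
    -- Assumption B
    (U : Fin K → Blk N → XVec N K → YVec M → ℝ)
    (GU : Fin K → Blk N → XVec N K → YVec M → Blk N)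
    (hGU : ∀ i z w y, HasGradientAt (fun u => U i u w y) (GU i z w y) z)
    (μ : Fin K → ℝ)
    (μmin : ℝ) (hμmin : μmin = ⨅ i, μ i)
    (hB1 : ∀ (i : Fin K) (w : XVec N K) (y : YVec M), y ∈ Y →
      ∀ z z' : Blk N, z ∈ Xi i → z' ∈ Xi i →
      ⟪GU i z' w y, z - z'⟫ + μ i / 2 * ‖z - z'‖ ^ 2 ≤ U i z w y - U i z' w y)
    (hB2 : ∀ (i : Fin K) (x : XVec N K) (y : YVec M),
      (∀ j, x j ∈ Xi j) → y ∈ Y → GU i (x i) x y = Gfx x y i)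
    (hB3 : ∀ (i : Fin K) (x : XVec N K) (y : YVec M),
      (∀ j, x j ∈ Xi j) → y ∈ Y →
      (∀ z ∈ Xi i, f (blockUpdate x i z) y ≤ U i z x y) ∧ U i (x i) x y = f x y)
    -- Assumption C-2 (concavity in y)
    (hC2 : ∀ (x : XVec N K) (y z : YVec M), (∀ j, x j ∈ Xi j) → z ∈ Y → y ∈ Y →
      f x y - f x z ≤ ⟪Gfy x z, y - z⟫)
    -- HiBSA iterates (concave case: exact regularized y-update)
    (ρ : ℝ) (hρ : 0 < ρ)
    (βs γ : ℕ → ℝ) (hβLx : ∀ (r : ℕ) (i : Fin K), Lx i < βs r)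
    (xs : ℕ → XVec N K) (ys : ℕ → YVec M)
    (hxup : ∀ (r : ℕ) (i : Fin K),
      xs (r + 1) i ∈ Xi i ∧
      ∀ z ∈ Xi i,
        U i (xs (r + 1) i) (hibsaW xs r i) (ys r) + h i (xs (r + 1) i)
            + βs r / 2 * ‖xs (r + 1) i - xs r i‖ ^ 2
          ≤ U i z (hibsaW xs r i) (ys r) + h i z + βs r / 2 * ‖z - xs r i‖ ^ 2)
    (hyup : ∀ r : ℕ,
      ys (r + 1) ∈ Y ∧
      ∀ u ∈ Y,
        f (xs (r + 1)) u - g u - 1 / (2 * ρ) * ‖u - ys r‖ ^ 2 - γ r / 2 * ‖u‖ ^ 2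
          ≤ f (xs (r + 1)) (ys (r + 1)) - g (ys (r + 1))
              - 1 / (2 * ρ) * ‖ys (r + 1) - ys r‖ ^ 2 - γ r / 2 * ‖ys (r + 1)‖ ^ 2) :
    -- conclusion: descent estimate
    ∀ r : ℕ, 1 ≤ r →
      (f (xs (r + 1)) (ys (r + 1)) + ∑ i, h i (xs (r + 1) i) - g (ys (r + 1)))
          - (f (xs r) (ys r) + ∑ i, h i (xs r i) - g (ys r))
        ≤ 1 / (2 * ρ) * ‖ys r - ys (r - 1)‖ ^ 2
            - (βs r / 2 + μmin - ρ * Ly ^ 2 / 2) * ‖xs (r + 1) - xs r‖ ^ 2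
            - (γ (r - 1) / 2 - 1 / ρ) * ‖ys (r + 1) - ys r‖ ^ 2
            + γ r / 2 * ‖ys (r + 1)‖ ^ 2 - γ (r - 1) / 2 * ‖ys r‖ ^ 2
            + (γ (r - 1) - γ r) / 2 * ‖ys (r + 1)‖ ^ 2 := by
  intro r hr
  obtain ⟨s, rfl⟩ : ∃ s, r = s + 1 := ⟨r - 1, by omega⟩
  rw [Nat.add_sub_cancel]
  have hx : ∀ r j, xs (r + 1) j ∈ Xi j := fun r j => (hxup r j).1
  have hy₀ : ys (s + 1) ∈ Y := (hyup s).1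
  have hy₁ : ys (s + 1 + 1) ∈ Y := (hyup (s + 1)).1
  have hsweep := hibsa_sweep_descent (β := βs (s + 1)) hXiconv
    (fun x => hGfx x _) (fun i x x' => hLx i _ hy₀ x x') (fun i z w => hGU i z w _)
    (fun i w => hB1 i w _ hy₀)
    (fun i x hx => hB2 i x _ hx hy₀) (fun i x hx => (hB3 i x _ hx hy₀).2)
    (fun i => (hhconv i).subset (subset_univ _) (hXiconv i))
    (fun i z hz => by have hz' := (hxup (s + 1) i).2 z hz; simp only [mem_ofPred_eq]; linarith)
    (fun i => hμmin ▸ ciInf_le (Finite.bddBelow_range μ) i) (fun i => (hβLx _ i).le)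
    (hx s) (hx (s + 1))
  have hmax : IsMaxOn (fun v => f (xs (s + 1)) v - g v - 1 / (2 * ρ) * ‖v - ys s‖ ^ 2
      - γ s / 2 * ‖v‖ ^ 2) Y (ys (s + 1)) := fun v hv => (hyup s).2 v hv
  have hlip : ‖Gfy (xs (s + 1 + 1)) (ys (s + 1)) - Gfy (xs (s + 1)) (ys (s + 1))‖
      ≤ Ly * ‖xs (s + 1 + 1) - xs (s + 1)‖ := by
    simpa using hLy _ _ _ _ (hx s) (hx (s + 1)) hy₀ hy₀
  have hascent := regularized_ascent_bound hρ (hC2 _ _ _ (hx (s + 1)) hy₀ hy₁)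
    (hmax.inner_le_of_regularized (hGfy _ _) (hgconv.subset (subset_univ _) hYconv) hy₀ hy₁) hlip
  linarith

/-- **Lemma 4 (descent lemma, concave case)** for HiBSA: under Assumptions A, B and C-2,
with `γ^r > 0` and `β^r > L_{xᵢ}`, for every `r ≥ 1`,
`ℓ(x^{r+1}, y^{r+1}) − ℓ(x^r, y^r) ≤ (1/(2ρ))‖y^r − y^{r−1}‖²
 − (β^r/2 + μ − ρL_y²/2)‖x^{r+1} − x^r‖² − (γ^{r−1}/2 − 1/ρ)‖y^{r+1} − y^r‖²
 + (γ^r/2)‖y^{r+1}‖² − (γ^{r−1}/2)‖y^r‖² + ((γ^{r−1} − γ^r)/2)‖y^{r+1}‖²`,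
where `μ = minᵢ μᵢ`. -/
theorem hibsa_descent_concave
    {N K M : ℕ} [NeZero K]
    -- Assumption A
    (f : XVec N K → YVec M → ℝ)
    (Xi : Fin K → Set (Blk N)) (hXiconv : ∀ i, Convex ℝ (Xi i))
    (hXicomp : ∀ i, IsCompact (Xi i))
    (Y : Set (YVec M)) (hYconv : Convex ℝ Y) (hYcomp : IsCompact Y)
    (h : Fin K → Blk N → ℝ) (hhconv : ∀ i, ConvexOn ℝ Set.univ (h i))
    (g : YVec M → ℝ) (hgconv : ConvexOn ℝ Set.univ g)
    (Gfx : XVec N K → YVec M → XVec N K)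
    (hGfx : ∀ x y, HasGradientAt (fun z => f z y) (Gfx x y) x)
    (Gfy : XVec N K → YVec M → YVec M)
    (hGfy : ∀ x y, HasGradientAt (fun z => f x z) (Gfy x y) y)
    (Lx : Fin K → ℝ)
    (hLx : ∀ (i : Fin K) (y : YVec M), y ∈ Y → ∀ x x' : XVec N K,
      (∀ j, x j ∈ Xi j) → (∀ j, x' j ∈ Xi j) →
      ‖Gfx x' y i - Gfx x y i‖ ≤ Lx i * ‖x' - x‖)
    (Ly : ℝ)
    (hLy : ∀ (x x' : XVec N K) (y y' : YVec M),
      (∀ j, x j ∈ Xi j) → (∀ j, x' j ∈ Xi j) → y ∈ Y → y' ∈ Y →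
      ‖Gfy x' y' - Gfy x y‖ ≤ Ly * Real.sqrt (‖x' - x‖ ^ 2 + ‖y' - y‖ ^ 2))
    -- Assumption B
    (U : Fin K → Blk N → XVec N K → YVec M → ℝ)
    (GU : Fin K → Blk N → XVec N K → YVec M → Blk N)
    (hGU : ∀ i z w y, HasGradientAt (fun u => U i u w y) (GU i z w y) z)
    (μ : Fin K → ℝ) (hμpos : ∀ i, 0 < μ i)
    (μmin : ℝ) (hμmin : μmin = ⨅ i, μ i)
    (hB1 : ∀ (i : Fin K) (w : XVec N K) (y : YVec M), y ∈ Y →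
      ∀ z z' : Blk N, z ∈ Xi i → z' ∈ Xi i →
      ⟪GU i z' w y, z - z'⟫ + μ i / 2 * ‖z - z'‖ ^ 2 ≤ U i z w y - U i z' w y)
    (hB2 : ∀ (i : Fin K) (x : XVec N K) (y : YVec M),
      (∀ j, x j ∈ Xi j) → y ∈ Y → GU i (x i) x y = Gfx x y i)
    (hB3 : ∀ (i : Fin K) (x : XVec N K) (y : YVec M),
      (∀ j, x j ∈ Xi j) → y ∈ Y →
      (∀ z ∈ Xi i, f (blockUpdate x i z) y ≤ U i z x y) ∧ U i (x i) x y = f x y)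
    (Lu : Fin K → ℝ)
    (hB4 : ∀ (i : Fin K) (w : XVec N K) (y : YVec M) (z z' : Blk N),
      ‖GU i z w y - GU i z' w y‖ ≤ Lu i * ‖z - z'‖)
    -- Assumption C-2 (concavity in y)
    (hC2 : ∀ (x : XVec N K) (y z : YVec M), (∀ j, x j ∈ Xi j) → z ∈ Y → y ∈ Y →
      f x y - f x z ≤ ⟪Gfy x z, y - z⟫)
    -- HiBSA iterates (concave case: exact regularized y-update)
    (ρ : ℝ) (hρ : 0 < ρ)
    (βs γ : ℕ → ℝ) (hγpos : ∀ r, 0 < γ r) (hβLx : ∀ (r : ℕ) (i : Fin K), Lx i < βs r)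
    (xs : ℕ → XVec N K) (ys : ℕ → YVec M)
    (hx0 : ∀ j, xs 0 j ∈ Xi j) (hy0 : ys 0 ∈ Y)
    (hxup : ∀ (r : ℕ) (i : Fin K),
      xs (r + 1) i ∈ Xi i ∧
      ∀ z ∈ Xi i,
        U i (xs (r + 1) i) (hibsaW xs r i) (ys r) + h i (xs (r + 1) i)
            + βs r / 2 * ‖xs (r + 1) i - xs r i‖ ^ 2
          ≤ U i z (hibsaW xs r i) (ys r) + h i z + βs r / 2 * ‖z - xs r i‖ ^ 2)
    (hyup : ∀ r : ℕ,
      ys (r + 1) ∈ Y ∧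
      ∀ u ∈ Y,
        f (xs (r + 1)) u - g u - 1 / (2 * ρ) * ‖u - ys r‖ ^ 2 - γ r / 2 * ‖u‖ ^ 2
          ≤ f (xs (r + 1)) (ys (r + 1)) - g (ys (r + 1))
              - 1 / (2 * ρ) * ‖ys (r + 1) - ys r‖ ^ 2 - γ r / 2 * ‖ys (r + 1)‖ ^ 2) :
    -- conclusion: descent estimate
    ∀ r : ℕ, 1 ≤ r →
      (f (xs (r + 1)) (ys (r + 1)) + ∑ i, h i (xs (r + 1) i) - g (ys (r + 1)))
          - (f (xs r) (ys r) + ∑ i, h i (xs r i) - g (ys r))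
        ≤ 1 / (2 * ρ) * ‖ys r - ys (r - 1)‖ ^ 2
            - (βs r / 2 + μmin - ρ * Ly ^ 2 / 2) * ‖xs (r + 1) - xs r‖ ^ 2
            - (γ (r - 1) / 2 - 1 / ρ) * ‖ys (r + 1) - ys r‖ ^ 2
            + γ r / 2 * ‖ys (r + 1)‖ ^ 2 - γ (r - 1) / 2 * ‖ys r‖ ^ 2
            + (γ (r - 1) - γ r) / 2 * ‖ys (r + 1)‖ ^ 2 :=
  hibsa_descent_concave_general f Xi hXiconv Y hYconv h hhconv g hgconv Gfx hGfx Gfy hGfy Lx hLx Ly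
    hLy U GU hGU μ μmin hμmin hB1 hB2 hB3 hC2 ρ hρ βs γ hβLx xs ys hxup hyup
end

section
/- Suppose Assumptions A and C-1 hold (with g convex). Let ρ > 0, x^r, x^{r+1} ∈ X, and suppose y^r and y^{r+1} are produced by consecutive linearized proximal y-updates: y^{r+1} = argmax_{y∈Y} ⟨∇_y f(x^{r+1}, y^r), y − y^r⟩ − (1/(2ρ))‖y − y^r‖² − g(y) and y^r = argmax_{y∈Y} ⟨∇_y f(x^r, y^{r−1}), y − y^{r−1}⟩ − (1/(2ρ))‖y − y^{r−1}‖² − g(y). Then, with F^{r+1} := (1/(2ρ))‖y^{r+1} − y^r‖² and F^r := (1/(2ρ))‖y^r − y^{r−1}‖², it holds that F^{r+1} ≤ F^r + (L_y²/(2θ))‖x^{r+1} − x^r‖² + (θ/2)‖y^{r+1} − y^r‖² − (θ − ρL_y²/2)‖y^r − y^{r−1}‖². -/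
open scoped RealInnerProductSpace
open Filter Topology

/-!
Each update satisfies the variational inequality of a proximal step; testing each one at the
other's output and adding bounds `‖y' - y‖²` by
`ρ ⟪∇_y f(x', y) - ∇_y f(x, ym1), y' - y⟫ + ⟪y - ym1, y' - y⟫`.
Split the gradient difference through `∇_y f(x, y)`. The `x`-part is handled by Lipschitz
continuity and Young's inequality; the `y`-part `c` joins `b = y - ym1` into the gradient step
`ρ • c + b`, which strong monotonicity contracts: `‖ρ • c + b‖² ≤ (1 - 2ρθ + ρ²L²) ‖b‖²`.
-/

section

variable {E : Type*} [NormedAddCommGroup E] [InnerProductSpace ℝ E]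

/-- The paper's linearized proximal `y`-update, with `G = ∇_y f(x^{r+1}, y^r)` and `yb = y^r`. -/
def IsLinearizedProxStep (Y : Set E) (g : E → ℝ) (ρ : ℝ) (G yb w : E) : Prop :=
  w ∈ Y ∧ ∀ u ∈ Y,
    ⟪G, u - yb⟫ - 1 / (2 * ρ) * ‖u - yb‖ ^ 2 - g u
      ≤ ⟪G, w - yb⟫ - 1 / (2 * ρ) * ‖w - yb‖ ^ 2 - g w

lemma IsLinearizedProxStep.inner_sub_le {Y : Set E} {g : E → ℝ} {ρ : ℝ} {G yb w u : E}
    (hY : Convex ℝ Y) (hg : ConvexOn ℝ Y g) (hw : IsLinearizedProxStep Y g ρ G yb w)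
    (hu : u ∈ Y) :
    ⟪G, u - w⟫ - ρ⁻¹ * ⟪w - yb, u - w⟫ ≤ g u - g w := by
  set S := ⟪G, u - w⟫ - ρ⁻¹ * ⟪w - yb, u - w⟫ - (g u - g w)
  set C := 1 / (2 * ρ) * ‖u - w‖ ^ 2
  -- First-order optimality along the segment from `w` to `u`: the defect `S` is `O(t)`.
  have hsmall : ∀ t ∈ Set.Ioc (0 : ℝ) 1, S ≤ t * C := by
    rintro t ⟨ht0, ht1⟩
    have hseg : w + t • (u - w) = (1 - t) • w + t • u := by
      rw [smul_sub, sub_smul, one_smul]; abel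
    have hmem : w + t • (u - w) ∈ Y := hseg ▸ hY hw.1 hu (by linarith) ht0.le (by ring)
    have hgseg : g (w + t • (u - w)) ≤ (1 - t) * g w + t * g u :=
      hseg ▸ hg.2 hw.1 hu (by linarith) ht0.le (by ring)
    have hmax := hw.2 _ hmem
    have hdiff : w + t • (u - w) - yb = (w - yb) + t • (u - w) := by abel
    rw [hdiff, inner_add_right, real_inner_smul_right, norm_add_sq_real,
      real_inner_smul_right, norm_smul, mul_pow, Real.norm_eq_abs, sq_abs] at hmax
    have hscale : 1 / (2 * ρ) * (2 * (t * ⟪w - yb, u - w⟫)) = t * (ρ⁻¹ * ⟪w - yb, u - w⟫) := by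
      field_simp
    refine le_of_mul_le_mul_left ?_ ht0
    nlinarith
  have hlim : Tendsto (fun t : ℝ => t * C) (𝓝[>] 0) (𝓝 0) := by
    simpa using (tendsto_id.mul_const C).mono_left (nhdsWithin_le_nhds (a := (0 : ℝ)))
  have hS : S ≤ 0 := ge_of_tendsto hlim (eventually_of_mem (Ioc_mem_nhdsGT one_pos) hsmall)
  linarith

lemma IsLinearizedProxStep.norm_sq_sub_le {Y : Set E} {g : E → ℝ} {ρ : ℝ} {G₀ G₁ y₀ y₁ y₂ : E}
    (hY : Convex ℝ Y) (hg : ConvexOn ℝ Y g) (hρ : 0 < ρ)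
    (h₁ : IsLinearizedProxStep Y g ρ G₀ y₀ y₁) (h₂ : IsLinearizedProxStep Y g ρ G₁ y₁ y₂) :
    ‖y₂ - y₁‖ ^ 2 ≤ ρ * ⟪G₁ - G₀, y₂ - y₁⟫ + ⟪y₁ - y₀, y₂ - y₁⟫ := by
  have v₁ := h₁.inner_sub_le hY hg h₂.1
  have v₂ := h₂.inner_sub_le hY hg h₁.1
  rw [← neg_sub y₂ y₁, inner_neg_right, inner_neg_right, real_inner_self_eq_norm_sq] at v₂
  rw [inner_sub_left]
  have hsum : ρ⁻¹ * ‖y₂ - y₁‖ ^ 2 ≤ ⟪G₁, y₂ - y₁⟫ - ⟪G₀, y₂ - y₁⟫ + ρ⁻¹ * ⟪y₁ - y₀, y₂ - y₁⟫ := by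
    linarith
  have := mul_le_mul_of_nonneg_left hsum hρ.le
  rwa [mul_add, ← mul_assoc, ← mul_assoc, mul_inv_cancel₀ hρ.ne', one_mul, one_mul] at this

lemma inner_sub_le_neg_mul_norm_sq {φ : E → ℝ} {D : E → E} {s : Set E} {θ : ℝ}
    (h : ∀ y z, y ∈ s → z ∈ s → φ z - φ y ≤ ⟪D y, z - y⟫ - θ / 2 * ‖z - y‖ ^ 2)
    {y z : E} (hy : y ∈ s) (hz : z ∈ s) :
    ⟪D z - D y, z - y⟫ ≤ -θ * ‖z - y‖ ^ 2 := by
  have h₁ := h y z hy hz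
  have h₂ := h z y hz hy
  rw [← neg_sub z y, inner_neg_right, norm_neg] at h₂
  rw [inner_sub_left]
  linarith

lemma norm_smul_add_sq_le {b c : E} {ρ θ L : ℝ} (hρ : 0 ≤ ρ)
    (hc : ‖c‖ ≤ L * ‖b‖) (hcb : ⟪c, b⟫ ≤ -θ * ‖b‖ ^ 2) :
    ‖ρ • c + b‖ ^ 2 ≤ (1 - 2 * ρ * θ + ρ ^ 2 * L ^ 2) * ‖b‖ ^ 2 := by
  have hc2 : ‖c‖ ^ 2 ≤ (L * ‖b‖) ^ 2 := pow_le_pow_left₀ (norm_nonneg c) hc 2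
  rw [norm_add_sq_real, real_inner_smul_left, norm_smul, mul_pow, Real.norm_eq_abs, sq_abs]
  nlinarith [mul_le_mul_of_nonneg_left hcb hρ, mul_le_mul_of_nonneg_left hc2 (sq_nonneg ρ)]

lemma one_div_two_mul_norm_sq_le_of_inner_le {a b c v : E} {d L ρ θ : ℝ} (hρ : 0 < ρ) (hθ : 0 < θ)
    (ha : ‖a‖ ^ 2 ≤ ρ * ⟪v + c, a⟫ + ⟪b, a⟫)
    (hv : ‖v‖ ≤ L * d) (hc : ‖c‖ ≤ L * ‖b‖) (hcb : ⟪c, b⟫ ≤ -θ * ‖b‖ ^ 2) :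
    1 / (2 * ρ) * ‖a‖ ^ 2
      ≤ 1 / (2 * ρ) * ‖b‖ ^ 2 + L ^ 2 / (2 * θ) * d ^ 2
          + θ / 2 * ‖a‖ ^ 2 - (θ - ρ * L ^ 2 / 2) * ‖b‖ ^ 2 := by
  have hsplit : ρ * ⟪v + c, a⟫ + ⟪b, a⟫ = ρ * ⟪v, a⟫ + ⟪ρ • c + b, a⟫ := by
    rw [inner_add_left, inner_add_left, real_inner_smul_left]; ring
  have hva : ⟪v, a⟫ ≤ L * d * ‖a‖ :=
    (real_inner_le_norm v a).trans (mul_le_mul_of_nonneg_right hv (norm_nonneg a))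
  have hyoung₁ : 2 * (L * d) * (θ * ‖a‖) ≤ (L * d) ^ 2 + (θ * ‖a‖) ^ 2 := two_mul_le_add_sq _ _
  have hyoung₂ : 2 * ⟪ρ • c + b, a⟫ ≤ ‖ρ • c + b‖ ^ 2 + ‖a‖ ^ 2 := by
    nlinarith [real_inner_le_norm (ρ • c + b) a, two_mul_le_add_sq ‖ρ • c + b‖ ‖a‖]
  have hcontr := norm_smul_add_sq_le hρ.le hc hcb
  have hscaled : θ * ‖a‖ ^ 2 ≤ ρ * (L * d) ^ 2 + ρ * θ ^ 2 * ‖a‖ ^ 2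
      + θ * (1 - 2 * ρ * θ + ρ ^ 2 * L ^ 2) * ‖b‖ ^ 2 := by
    nlinarith [mul_le_mul_of_nonneg_left hva (mul_nonneg hθ.le hρ.le)]
  rw [← mul_le_mul_iff_right₀ (show 0 < 2 * ρ * θ by positivity)]
  field_simp
  nlinarith

end

theorem hibsa_y_difference_recursion_general
    {n M : ℕ}
    -- Assumption A
    (X : Set (EuclideanSpace ℝ (Fin n)))
    (Y : Set (EuclideanSpace ℝ (Fin M))) (hYconv : Convex ℝ Y)
    (f : EuclideanSpace ℝ (Fin n) → EuclideanSpace ℝ (Fin M) → ℝ)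
    (g : EuclideanSpace ℝ (Fin M) → ℝ) (hgconv : ConvexOn ℝ Set.univ g)
    (Gfy : EuclideanSpace ℝ (Fin n) → EuclideanSpace ℝ (Fin M) → EuclideanSpace ℝ (Fin M))
    (Ly : ℝ)
    (hLy : ∀ (x x' : EuclideanSpace ℝ (Fin n)) (y y' : EuclideanSpace ℝ (Fin M)),
      x ∈ X → x' ∈ X → y ∈ Y → y' ∈ Y →
      ‖Gfy x' y' - Gfy x y‖ ≤ Ly * Real.sqrt (‖x' - x‖ ^ 2 + ‖y' - y‖ ^ 2))
    -- Assumption C-1 (θ-strong concavity in y)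
    (θ : ℝ) (hθ : 1 < θ)
    (hC1 : ∀ (x : EuclideanSpace ℝ (Fin n)) (y z : EuclideanSpace ℝ (Fin M)),
      x ∈ X → y ∈ Y → z ∈ Y →
      f x z - f x y ≤ ⟪Gfy x y, z - y⟫ - θ / 2 * ‖z - y‖ ^ 2)
    -- two consecutive linearized proximal y-updates
    (ρ : ℝ) (hρ : 0 < ρ)
    (x x' : EuclideanSpace ℝ (Fin n)) (hx : x ∈ X) (hx' : x' ∈ X)
    (ym1 y y' : EuclideanSpace ℝ (Fin M)) (hym1 : ym1 ∈ Y)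
    (hyup0 : y ∈ Y ∧ ∀ u ∈ Y,
      ⟪Gfy x ym1, u - ym1⟫ - 1 / (2 * ρ) * ‖u - ym1‖ ^ 2 - g u
        ≤ ⟪Gfy x ym1, y - ym1⟫ - 1 / (2 * ρ) * ‖y - ym1‖ ^ 2 - g y)
    (hyup1 : y' ∈ Y ∧ ∀ u ∈ Y,
      ⟪Gfy x' y, u - y⟫ - 1 / (2 * ρ) * ‖u - y‖ ^ 2 - g u
        ≤ ⟪Gfy x' y, y' - y⟫ - 1 / (2 * ρ) * ‖y' - y‖ ^ 2 - g y') :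
    -- conclusion
    1 / (2 * ρ) * ‖y' - y‖ ^ 2
      ≤ 1 / (2 * ρ) * ‖y - ym1‖ ^ 2 + Ly ^ 2 / (2 * θ) * ‖x' - x‖ ^ 2
          + θ / 2 * ‖y' - y‖ ^ 2 - (θ - ρ * Ly ^ 2 / 2) * ‖y - ym1‖ ^ 2 := by
  have hy := hyup0.1
  have hstep := IsLinearizedProxStep.norm_sq_sub_le hYconv
    (hgconv.subset (Set.subset_univ Y) hYconv) hρ hyup0 hyup1
  rw [show Gfy x' y - Gfy x ym1 = (Gfy x' y - Gfy x y) + (Gfy x y - Gfy x ym1) by abel] at hstep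
  have hLx : ‖Gfy x' y - Gfy x y‖ ≤ Ly * ‖x' - x‖ := by
    simpa [Real.sqrt_sq (norm_nonneg _)] using hLy x x' y y hx hx' hy hy
  have hLyy : ‖Gfy x y - Gfy x ym1‖ ≤ Ly * ‖y - ym1‖ := by
    simpa [Real.sqrt_sq (norm_nonneg _)] using hLy x x ym1 y hx hx hym1 hy
  exact one_div_two_mul_norm_sq_le_of_inner_le hρ (by linarith) hstep hLx hLyy
    (inner_sub_le_neg_mul_norm_sq (hC1 x · · hx) hym1 hy)

/-- The recursion on successive `y`-differences (eq. (eq:rec) in the paper) used in the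
potential-decrease argument for the strongly concave case: with
`F^{r+1} = (1/(2ρ))‖y^{r+1} − y^r‖²` and `F^r = (1/(2ρ))‖y^r − y^{r−1}‖²`,
`F^{r+1} ≤ F^r + (L_y²/(2θ))‖x^{r+1} − x^r‖² + (θ/2)‖y^{r+1} − y^r‖²
 − (θ − ρL_y²/2)‖y^r − y^{r−1}‖²`. -/
theorem hibsa_y_difference_recursion
    {n M : ℕ}
    -- Assumption A
    (X : Set (EuclideanSpace ℝ (Fin n))) (hXconv : Convex ℝ X) (hXcomp : IsCompact X)
    (Y : Set (EuclideanSpace ℝ (Fin M))) (hYconv : Convex ℝ Y) (hYcomp : IsCompact Y)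
    (f : EuclideanSpace ℝ (Fin n) → EuclideanSpace ℝ (Fin M) → ℝ)
    (g : EuclideanSpace ℝ (Fin M) → ℝ) (hgconv : ConvexOn ℝ Set.univ g)
    (Gfy : EuclideanSpace ℝ (Fin n) → EuclideanSpace ℝ (Fin M) → EuclideanSpace ℝ (Fin M))
    (hGfy : ∀ x y, HasGradientAt (fun z => f x z) (Gfy x y) y)
    (Ly : ℝ)
    (hLy : ∀ (x x' : EuclideanSpace ℝ (Fin n)) (y y' : EuclideanSpace ℝ (Fin M)),
      x ∈ X → x' ∈ X → y ∈ Y → y' ∈ Y →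
      ‖Gfy x' y' - Gfy x y‖ ≤ Ly * Real.sqrt (‖x' - x‖ ^ 2 + ‖y' - y‖ ^ 2))
    -- Assumption C-1 (θ-strong concavity in y)
    (θ : ℝ) (hθ : 1 < θ)
    (hC1 : ∀ (x : EuclideanSpace ℝ (Fin n)) (y z : EuclideanSpace ℝ (Fin M)),
      x ∈ X → y ∈ Y → z ∈ Y →
      f x z - f x y ≤ ⟪Gfy x y, z - y⟫ - θ / 2 * ‖z - y‖ ^ 2)
    -- two consecutive linearized proximal y-updates
    (ρ : ℝ) (hρ : 0 < ρ)
    (x x' : EuclideanSpace ℝ (Fin n)) (hx : x ∈ X) (hx' : x' ∈ X)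
    (ym1 y y' : EuclideanSpace ℝ (Fin M)) (hym1 : ym1 ∈ Y)
    (hyup0 : y ∈ Y ∧ ∀ u ∈ Y,
      ⟪Gfy x ym1, u - ym1⟫ - 1 / (2 * ρ) * ‖u - ym1‖ ^ 2 - g u
        ≤ ⟪Gfy x ym1, y - ym1⟫ - 1 / (2 * ρ) * ‖y - ym1‖ ^ 2 - g y)
    (hyup1 : y' ∈ Y ∧ ∀ u ∈ Y,
      ⟪Gfy x' y, u - y⟫ - 1 / (2 * ρ) * ‖u - y‖ ^ 2 - g u
        ≤ ⟪Gfy x' y, y' - y⟫ - 1 / (2 * ρ) * ‖y' - y‖ ^ 2 - g y') :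
    -- conclusion
    1 / (2 * ρ) * ‖y' - y‖ ^ 2
      ≤ 1 / (2 * ρ) * ‖y - ym1‖ ^ 2 + Ly ^ 2 / (2 * θ) * ‖x' - x‖ ^ 2
          + θ / 2 * ‖y' - y‖ ^ 2 - (θ - ρ * Ly ^ 2 / 2) * ‖y - ym1‖ ^ 2 :=
  hibsa_y_difference_recursion_general X Y hYconv f g hgconv Gfy Ly hLy θ hθ hC1 ρ hρ x x' hx hx'
    ym1 y y' hym1 hyup0 hyup1
end

section
/- Suppose Assumptions A and C-2 hold (with g convex). Let ρ > 0 and 0 < γ^r ≤ γ^{r−1}, let x^r, x^{r+1} ∈ X, and suppose y^r and y^{r+1} are produced by consecutive regularized exact y-updates: y^{r+1} = argmax_{y∈Y} f(x^{r+1}, y) − g(y) − (1/(2ρ))‖y − y^r‖² − (γ^r/2)‖y‖² and y^r = argmax_{y∈Y} f(x^r, y) − g(y) − (1/(2ρ))‖y − y^{r−1}‖² − (γ^{r−1}/2)‖y‖². Then (1/(2ρ))‖y^{r+1} − y^r‖² − ((γ^{r−1} − γ^r)/2)‖y^{r+1}‖² ≤ (1/(2ρ))‖y^r − y^{r−1}‖²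 − ((γ^{r−1} − γ^r)/2)‖y^r‖² + (L_y²/(2γ^r))‖x^{r+1} − x^r‖² − (γ^r/2)‖y^{r+1} − y^r‖². -/
open scoped RealInnerProductSpace

set_option maxHeartbeats 1000000

private lemma expand_sq_aux {M : ℕ} (v w : EuclideanSpace ℝ (Fin M)) (t : ℝ) :
    ‖v + t • w‖ ^ 2 = ‖v‖ ^ 2 + 2 * t * ⟪v, w⟫ + t ^ 2 * ‖w‖ ^ 2 := by
  rw [norm_add_sq_real, real_inner_smul_right, norm_smul, Real.norm_eq_abs, mul_pow, sq_abs]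
  ring

/-- First-order optimality (variational inequality) at the maximizer of
`F u - g u - 1/(2ρ)‖u-a‖² - (γ/2)‖u‖²` over a convex set `Y`, where `F` is concave on `Y`
(expressed through a gradient inequality), its gradient `G` is Lipschitz on `Y`, and `g`
is convex. -/
private lemma vi_aux {M : ℕ} {Y : Set (EuclideanSpace ℝ (Fin M))} (hYconv : Convex ℝ Y)
    (F g : EuclideanSpace ℝ (Fin M) → ℝ)
    (G : EuclideanSpace ℝ (Fin M) → EuclideanSpace ℝ (Fin M))
    (hF : ∀ u z, u ∈ Y → z ∈ Y → F u - F z ≤ ⟪G z, u - z⟫)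
    (hg : ConvexOn ℝ Set.univ g)
    (L : ℝ) (hGlip : ∀ z w, z ∈ Y → w ∈ Y → ‖G z - G w‖ ≤ L * ‖z - w‖)
    (ρ γ : ℝ) (hρ : 0 < ρ) (hγ : 0 < γ)
    (a ystar : EuclideanSpace ℝ (Fin M)) (hystar : ystar ∈ Y)
    (hopt : ∀ u ∈ Y, F u - g u - 1 / (2 * ρ) * ‖u - a‖ ^ 2 - γ / 2 * ‖u‖ ^ 2
      ≤ F ystar - g ystar - 1 / (2 * ρ) * ‖ystar - a‖ ^ 2 - γ / 2 * ‖ystar‖ ^ 2)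
    (u : EuclideanSpace ℝ (Fin M)) (hu : u ∈ Y) :
    ⟪G ystar, u - ystar⟫ + g ystar - g u
      ≤ 1 / (2 * ρ) * (2 * ⟪ystar - a, u - ystar⟫) + γ * ⟪ystar, u - ystar⟫ := by
  apply le_of_forall_pos_le_add
  intro ε hε
  have hDnn : 0 ≤ ‖u - ystar‖ ^ 2 := sq_nonneg _
  have habs : 0 ≤ |L| * ‖u - ystar‖ ^ 2 := mul_nonneg (abs_nonneg _) hDnn
  set t := min 1 (ε / (|L| * ‖u - ystar‖ ^ 2 + (1 / (2 * ρ) + γ / 2) * ‖u - ystar‖ ^ 2 + 1)) with htdef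
  have hden : 0 < |L| * ‖u - ystar‖ ^ 2 + (1 / (2 * ρ) + γ / 2) * ‖u - ystar‖ ^ 2 + 1 := by positivity
  have htpos : 0 < t := lt_min one_pos (by positivity)
  have ht1 : t ≤ 1 := min_le_left _ _
  have htC : t * (|L| * ‖u - ystar‖ ^ 2 + (1 / (2 * ρ) + γ / 2) * ‖u - ystar‖ ^ 2 + 1) ≤ ε := by
    have h2 : t ≤ ε / (|L| * ‖u - ystar‖ ^ 2 + (1 / (2 * ρ) + γ / 2) * ‖u - ystar‖ ^ 2 + 1) := min_le_right _ _
    calc t * (|L| * ‖u - ystar‖ ^ 2 + (1 / (2 * ρ) + γ / 2) * ‖u - ystar‖ ^ 2 + 1)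
        ≤ (ε / (|L| * ‖u - ystar‖ ^ 2 + (1 / (2 * ρ) + γ / 2) * ‖u - ystar‖ ^ 2 + 1))
            * (|L| * ‖u - ystar‖ ^ 2 + (1 / (2 * ρ) + γ / 2) * ‖u - ystar‖ ^ 2 + 1) :=
          mul_le_mul_of_nonneg_right h2 hden.le
      _ = ε := div_mul_cancel₀ ε (ne_of_gt hden)
  have hco : ystar + t • (u - ystar) = (1 - t) • ystar + t • u := by module
  have hmem : ystar + t • (u - ystar) ∈ Y := by
    rw [hco]; exact hYconv hystar hu (by linarith) htpos.le (by ring)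
  have hgt : g (ystar + t • (u - ystar)) ≤ (1 - t) * g ystar + t * g u := by
    rw [hco]
    exact hg.2 (Set.mem_univ _) (Set.mem_univ _) (by linarith) htpos.le (by ring)
  have e2 : ystar - (ystar + t • (u - ystar)) = (-t) • (u - ystar) := by module
  have hFt : F ystar + t * ⟪G (ystar + t • (u - ystar)), u - ystar⟫
      ≤ F (ystar + t • (u - ystar)) := by
    have c2 := hF ystar _ hystar hmem
    rw [e2, real_inner_smul_right] at c2
    linarith [c2]
  have hGt : ⟪G ystar, u - ystar⟫ - |L| * t * ‖u - ystar‖ ^ 2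
      ≤ ⟪G (ystar + t • (u - ystar)), u - ystar⟫ := by
    have hl := hGlip ystar _ hystar hmem
    rw [e2, norm_smul, Real.norm_eq_abs, abs_neg, abs_of_pos htpos] at hl
    have hl2 : ‖G ystar - G (ystar + t • (u - ystar))‖ ≤ |L| * (t * ‖u - ystar‖) :=
      le_trans hl (mul_le_mul_of_nonneg_right (le_abs_self L) (by positivity))
    have hn := real_inner_le_norm (G ystar - G (ystar + t • (u - ystar))) (u - ystar)
    have hn2 : ‖G ystar - G (ystar + t • (u - ystar))‖ * ‖u - ystar‖
        ≤ |L| * (t * ‖u - ystar‖) * ‖u - ystar‖ :=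
      mul_le_mul_of_nonneg_right hl2 (norm_nonneg _)
    have hin : ⟪G ystar - G (ystar + t • (u - ystar)), u - ystar⟫
        = ⟪G ystar, u - ystar⟫ - ⟪G (ystar + t • (u - ystar)), u - ystar⟫ :=
      inner_sub_left _ _ _
    nlinarith [hn, hn2, hin.le, hin.ge]
  have h1 : ‖(ystar + t • (u - ystar)) - a‖ ^ 2
      = ‖ystar - a‖ ^ 2 + 2 * t * ⟪ystar - a, u - ystar⟫ + t ^ 2 * ‖u - ystar‖ ^ 2 := by
    have e : (ystar + t • (u - ystar)) - a = (ystar - a) + t • (u - ystar) := by module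
    rw [e, expand_sq_aux]
  have h2 : ‖ystar + t • (u - ystar)‖ ^ 2
      = ‖ystar‖ ^ 2 + 2 * t * ⟪ystar, u - ystar⟫ + t ^ 2 * ‖u - ystar‖ ^ 2 := by
    rw [expand_sq_aux]
  have hoptt := hopt _ hmem
  rw [h1, h2] at hoptt
  have hmul : t * (⟪G ystar, u - ystar⟫ + g ystar - g u
      - 1 / (2 * ρ) * (2 * ⟪ystar - a, u - ystar⟫) - γ * ⟪ystar, u - ystar⟫)
      ≤ t * ε := by
    have hGt' := mul_le_mul_of_nonneg_left hGt htpos.le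
    have htC2 : t * (t * (|L| * ‖u - ystar‖ ^ 2 + (1 / (2 * ρ) + γ / 2) * ‖u - ystar‖ ^ 2 + 1)) ≤ t * ε :=
      mul_le_mul_of_nonneg_left htC htpos.le
    linarith [hoptt, hFt, hgt, hGt', htC2, sq_nonneg t]
  have hfin := le_of_mul_le_mul_left hmul htpos
  linarith [hfin]

/-- The recursion on successive `y`-differences used in the potential-decrease lemma for
the concave case of HiBSA: with consecutive regularized exact `y`-updates and
`0 < γ^r ≤ γ^{r−1}`,
`(1/(2ρ))‖y^{r+1} − y^r‖² − ((γ^{r−1} − γ^r)/2)‖y^{r+1}‖²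
 ≤ (1/(2ρ))‖y^r − y^{r−1}‖² − ((γ^{r−1} − γ^r)/2)‖y^r‖²
 + (L_y²/(2γ^r))‖x^{r+1} − x^r‖² − (γ^r/2)‖y^{r+1} − y^r‖²`. -/
theorem hibsa_y_difference_recursion_concave
    {n M : ℕ}
    -- Assumption A
    (X : Set (EuclideanSpace ℝ (Fin n))) (hXconv : Convex ℝ X) (hXcomp : IsCompact X)
    (Y : Set (EuclideanSpace ℝ (Fin M))) (hYconv : Convex ℝ Y) (hYcomp : IsCompact Y)
    (f : EuclideanSpace ℝ (Fin n) → EuclideanSpace ℝ (Fin M) → ℝ)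
    (g : EuclideanSpace ℝ (Fin M) → ℝ) (hgconv : ConvexOn ℝ Set.univ g)
    (Gfy : EuclideanSpace ℝ (Fin n) → EuclideanSpace ℝ (Fin M) → EuclideanSpace ℝ (Fin M))
    (hGfy : ∀ x y, HasGradientAt (fun z => f x z) (Gfy x y) y)
    (Ly : ℝ)
    (hLy : ∀ (x x' : EuclideanSpace ℝ (Fin n)) (y y' : EuclideanSpace ℝ (Fin M)),
      x ∈ X → x' ∈ X → y ∈ Y → y' ∈ Y →
      ‖Gfy x' y' - Gfy x y‖ ≤ Ly * Real.sqrt (‖x' - x‖ ^ 2 + ‖y' - y‖ ^ 2))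
    -- Assumption C-2 (concavity in y)
    (hC2 : ∀ (x : EuclideanSpace ℝ (Fin n)) (y z : EuclideanSpace ℝ (Fin M)),
      x ∈ X → z ∈ Y → y ∈ Y → f x y - f x z ≤ ⟪Gfy x z, y - z⟫)
    -- two consecutive regularized exact y-updates
    (ρ γr γm1 : ℝ) (hρ : 0 < ρ) (hγr : 0 < γr) (hγ : γr ≤ γm1)
    (x x' : EuclideanSpace ℝ (Fin n)) (hx : x ∈ X) (hx' : x' ∈ X)
    (ym1 y y' : EuclideanSpace ℝ (Fin M)) (hym1 : ym1 ∈ Y)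
    (hyup0 : y ∈ Y ∧ ∀ u ∈ Y,
      f x u - g u - 1 / (2 * ρ) * ‖u - ym1‖ ^ 2 - γm1 / 2 * ‖u‖ ^ 2
        ≤ f x y - g y - 1 / (2 * ρ) * ‖y - ym1‖ ^ 2 - γm1 / 2 * ‖y‖ ^ 2)
    (hyup1 : y' ∈ Y ∧ ∀ u ∈ Y,
      f x' u - g u - 1 / (2 * ρ) * ‖u - y‖ ^ 2 - γr / 2 * ‖u‖ ^ 2
        ≤ f x' y' - g y' - 1 / (2 * ρ) * ‖y' - y‖ ^ 2 - γr / 2 * ‖y'‖ ^ 2) :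
    -- conclusion
    1 / (2 * ρ) * ‖y' - y‖ ^ 2 - (γm1 - γr) / 2 * ‖y'‖ ^ 2
      ≤ 1 / (2 * ρ) * ‖y - ym1‖ ^ 2 - (γm1 - γr) / 2 * ‖y‖ ^ 2
          + Ly ^ 2 / (2 * γr) * ‖x' - x‖ ^ 2 - γr / 2 * ‖y' - y‖ ^ 2 := by
  obtain ⟨hyY, hopt0⟩ := hyup0
  obtain ⟨hy'Y, hopt1⟩ := hyup1
  have hγm1 : 0 < γm1 := lt_of_lt_of_le hγr hγ
  -- Lipschitz bounds for the y-gradient with one variable frozen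
  have hGlip1 : ∀ z w, z ∈ Y → w ∈ Y → ‖Gfy x' z - Gfy x' w‖ ≤ Ly * ‖z - w‖ := by
    intro z w hz hw
    have h := hLy x' x' w z hx' hx' hw hz
    rwa [sub_self, norm_zero, zero_pow (by norm_num), zero_add,
      Real.sqrt_sq (norm_nonneg _)] at h
  have hGlip0 : ∀ z w, z ∈ Y → w ∈ Y → ‖Gfy x z - Gfy x w‖ ≤ Ly * ‖z - w‖ := by
    intro z w hz hw
    have h := hLy x x w z hx hx hw hz
    rwa [sub_self, norm_zero, zero_pow (by norm_num), zero_add,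
      Real.sqrt_sq (norm_nonneg _)] at h
  -- variational inequalities at the two maximizers
  have VI1 := vi_aux hYconv (f x') g (Gfy x')
    (fun u z hu hz => hC2 x' u z hx' hz hu) hgconv Ly hGlip1 ρ γr hρ hγr
    y y' hy'Y hopt1 y hyY
  have VI0 := vi_aux hYconv (f x) g (Gfy x)
    (fun u z hu hz => hC2 x u z hx hz hu) hgconv Ly hGlip0 ρ γm1 hρ hγm1
    ym1 y hyY hopt0 y' hy'Y
  -- monotonicity of the concave gradient (in y, at x')
  have mono : 0 ≤ ⟪Gfy x' y - Gfy x' y', y' - y⟫ := by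
    have a1 := hC2 x' y y' hx' hy'Y hyY
    have a2 := hC2 x' y' y hx' hyY hy'Y
    have e : ⟪Gfy x' y - Gfy x' y', y' - y⟫
        = ⟪Gfy x' y', y - y'⟫ + ⟪Gfy x' y, y' - y⟫ := by
      simp only [inner_sub_left, inner_sub_right]; ring
    linarith [a1, a2, e.le, e.ge]
  -- split of the summed gradient terms
  have esplit : ⟪Gfy x' y', y - y'⟫ + ⟪Gfy x y, y' - y⟫
      = ⟪Gfy x y - Gfy x' y, y' - y⟫ + ⟪Gfy x' y - Gfy x' y', y' - y⟫ := by
    simp only [inner_sub_left, inner_sub_right]; ring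
  -- Lipschitz-in-x + Young bound for the cross term
  have hlip : ‖Gfy x' y - Gfy x y‖ ≤ Ly * ‖x' - x‖ := by
    have h := hLy x x' y y hx hx' hyY hyY
    rwa [sub_self, norm_zero, zero_pow (by norm_num), add_zero,
      Real.sqrt_sq (norm_nonneg _)] at h
  have hcross' : -(Ly ^ 2 / (2 * γr) * ‖x' - x‖ ^ 2 + γr / 2 * ‖y' - y‖ ^ 2)
      ≤ ⟪Gfy x y - Gfy x' y, y' - y⟫ := by
    have h1 := real_inner_le_norm (Gfy x' y - Gfy x y) (y' - y)
    have h2 : ‖Gfy x' y - Gfy x y‖ * ‖y' - y‖ ≤ (Ly * ‖x' - x‖) * ‖y' - y‖ :=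
      mul_le_mul_of_nonneg_right hlip (norm_nonneg _)
    have hid : Ly ^ 2 / (2 * γr) * ‖x' - x‖ ^ 2 + γr / 2 * ‖y' - y‖ ^ 2
        - Ly * ‖x' - x‖ * ‖y' - y‖
        = (Ly * ‖x' - x‖ - γr * ‖y' - y‖) ^ 2 / (2 * γr) := by
      field_simp; ring
    have hsq : 0 ≤ (Ly * ‖x' - x‖ - γr * ‖y' - y‖) ^ 2 / (2 * γr) := by positivity
    have hneg : ⟪Gfy x y - Gfy x' y, y' - y⟫ = -⟪Gfy x' y - Gfy x y, y' - y⟫ := by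
      simp only [inner_sub_left]; ring
    linarith [h1, h2, hid.le, hid.ge, hsq, hneg.le, hneg.ge]
  -- inner-product identities
  have f1 : ‖y' - y‖ ^ 2 = ‖y'‖ ^ 2 - 2 * ⟪y', y⟫ + ‖y‖ ^ 2 := norm_sub_sq_real y' y
  have f2 : ⟪y', y - y'⟫ = ⟪y', y⟫ - ‖y'‖ ^ 2 := by
    rw [inner_sub_right, real_inner_self_eq_norm_sq]
  have f3 : ⟪y, y' - y⟫ = ⟪y, y'⟫ - ‖y‖ ^ 2 := by
    rw [inner_sub_right, real_inner_self_eq_norm_sq]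
  have f4 : ⟪y, y'⟫ = ⟪y', y⟫ := real_inner_comm y' y
  have eC : ⟪y' - y, y - y'⟫ = -‖y' - y‖ ^ 2 := by
    rw [show y - y' = -(y' - y) from (neg_sub y' y).symm, inner_neg_right,
      real_inner_self_eq_norm_sq]
  -- Cauchy–Schwarz + AM–GM for the prox cross term
  have eD : 2 * ⟪y - ym1, y' - y⟫ ≤ ‖y - ym1‖ ^ 2 + ‖y' - y‖ ^ 2 := by
    have h := real_inner_le_norm (y - ym1) (y' - y)
    nlinarith [h, sq_nonneg (‖y - ym1‖ - ‖y' - y‖)]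
  have hρinv : (0:ℝ) ≤ 1 / (2 * ρ) := by positivity
  have eD' : 1 / (2 * ρ) * (2 * ⟪y - ym1, y' - y⟫)
      ≤ 1 / (2 * ρ) * (‖y - ym1‖ ^ 2 + ‖y' - y‖ ^ 2) :=
    mul_le_mul_of_nonneg_left eD hρinv
  -- pre-multiplied identities for linarith
  have m1 : γr * ⟪y', y - y'⟫ = γr * ⟪y', y⟫ - γr * ‖y'‖ ^ 2 := by rw [f2]; ring
  have m2 : γm1 * ⟪y, y' - y⟫ = γm1 * ⟪y', y⟫ - γm1 * ‖y‖ ^ 2 := by rw [f3, f4]; ring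
  have m3 : γr * ‖y' - y‖ ^ 2 = γr * ‖y'‖ ^ 2 - 2 * (γr * ⟪y', y⟫) + γr * ‖y‖ ^ 2 := by
    rw [f1]; ring
  have m4 : γm1 * ‖y' - y‖ ^ 2 = γm1 * ‖y'‖ ^ 2 - 2 * (γm1 * ⟪y', y⟫) + γm1 * ‖y‖ ^ 2 := by
    rw [f1]; ring
  have m5 : 1 / (2 * ρ) * (2 * ⟪y' - y, y - y'⟫) = -(1 / (2 * ρ) * (2 * ‖y' - y‖ ^ 2)) := by
    rw [eC]; ring
  have hmono2 : 0 ≤ (γm1 - γr) * ‖y' - y‖ ^ 2 := mul_nonneg (by linarith) (sq_nonneg _)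
  linarith [VI1, VI0, eD', mono, esplit.le, esplit.ge, hcross', hmono2, m1, m2, m3, m4, m5]
end

section
/- Suppose Assumptions A and C-2 hold (with g convex). Let ρ > 0, γ^r > 0, x^r, x^{r+1} ∈ X, y^r ∈ Y, and let y^{r+1} = argmax_{y∈Y} f(x^{r+1}, y) − g(y) − (1/(2ρ))‖y − y^r‖² − (γ^r/2)‖y‖². Then (1/ρ)‖y^r − Py^{1/ρ}(y^r + ρ∇_y f(x^r, y^r))‖ ≤ L_y‖x^{r+1} − x^r‖ + (1/ρ + L_y)‖y^{r+1} − y^r‖ + γ^r‖y^{r+1}‖, i.e., the y-block of the stationarity gap at (x^r, y^r) is bounded by the successive differences of the iterates plus the penalty term γ^r‖y^{r+1}‖. -/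
open scoped RealInnerProductSpace

open Set InnerProductSpace

/-! The update `y'` maximises a smooth-minus-convex objective over `Y`, and its first-order
condition says exactly that `y'` is the proximal point of the shifted argument
`y + ρ (∇_y f(x', y') - γ y')`. Proximal points are 1-Lipschitz in their argument, so
`‖y' - Py (y + ρ ∇_y f(x, y))‖ ≤ ρ ‖∇_y f(x', y') - ∇_y f(x, y)‖ + ρ γ ‖y'‖`; the Lipschitz
gradient and the triangle inequality through `y'` give the bound. -/

theorem ConvexOn.le_sub_of_isMaxOn_sub {E : Type*} [NormedAddCommGroup E] [NormedSpace ℝ E]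
    {Y : Set E} {g F : E → ℝ} {F' : E →L[ℝ] ℝ} {p u : E} (hg : ConvexOn ℝ Y g)
    (hF : HasFDerivAt F F' p) (hmax : IsMaxOn (fun z => F z - g z) Y p) (hp : p ∈ Y)
    (hu : u ∈ Y) :
    F' (u - p) ≤ g u - g p := by
  -- On the segment `[p, u]`, convexity bounds `g` by its chord, so `F` minus the chord is
  -- maximised at `p` and Fermat's rule applies in one variable.
  set φ : ℝ → ℝ := fun t => F (p + t • (u - p)) - t * (g u - g p)
  have hline : HasDerivAt (fun t : ℝ => p + t • (u - p)) (u - p) 0 := by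
    simpa using ((hasDerivAt_id (0 : ℝ)).smul_const (u - p)).const_add p
  have hφ : HasDerivAt φ (F' (u - p) - (g u - g p)) 0 := by
    have hF0 : HasFDerivAt F F' (p + (0 : ℝ) • (u - p)) := by simpa using hF
    have := (hF0.comp_hasDerivAt 0 hline).sub ((hasDerivAt_id (0 : ℝ)).mul_const (g u - g p))
    rwa [one_mul] at this
  have hφmax : IsMaxOn φ (Icc 0 1) 0 := by
    refine isMaxOn_iff.mpr fun t ht => ?_
    have hchord : g (p + t • (u - p)) ≤ g p + t * (g u - g p) := by
      have := hg.2 hp hu (sub_nonneg.mpr ht.2) ht.1 (sub_add_cancel 1 t)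
      rw [show p + t • (u - p) = (1 - t) • p + t • u by module]
      simp only [smul_eq_mul] at this
      linarith
    have := isMaxOn_iff.mp hmax _ (hg.1.add_smul_sub_mem hp hu ht)
    simp only [φ, zero_smul, add_zero, zero_mul, sub_zero]
    linarith
  have hcone : (1 : ℝ) ∈ posTangentConeAt (Icc 0 1) 0 :=
    mem_posTangentConeAt_of_segment_subset (by simp [segment_eq_Icc])
  simpa [sub_nonpos] using
    hφmax.localize.hasFDerivWithinAt_nonpos hφ.hasFDerivAt.hasFDerivWithinAt hcone

section Prox

variable {E : Type*} [NormedAddCommGroup E] [InnerProductSpace ℝ E]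

theorem HasGradientAt.sub_mul_norm_sub_sq [CompleteSpace E] {F : E → ℝ} {G p : E}
    (hF : HasGradientAt F G p) (a : ℝ) (c : E) :
    HasGradientAt (fun z => F z - a / 2 * ‖z - c‖ ^ 2) (G - a • (p - c)) p := by
  rw [hasGradientAt_iff_hasFDerivAt] at hF ⊢
  refine (hF.sub (((hasFDerivAt_id p).sub_const c).norm_sq.const_mul (a / 2))).congr_fderiv ?_
  ext d
  simp
  ring

/-- The variational inequality characterising `p = prox_{ρ (g + ι_Y)} w`. -/
def IsProxPoint (Y : Set E) (g : E → ℝ) (ρ : ℝ) (w p : E) : Prop :=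
  p ∈ Y ∧ ∀ u ∈ Y, ⟪w - p, u - p⟫ ≤ ρ * (g u - g p)

theorem isProxPoint_of_isMaxOn [CompleteSpace E] {Y : Set E} {g F : E → ℝ} {ρ : ℝ} {c p G : E}
    (hg : ConvexOn ℝ Y g) (hρ : 0 < ρ) (hF : HasGradientAt F G p) (hp : p ∈ Y)
    (hmax : IsMaxOn (fun z => F z - g z - 1 / (2 * ρ) * ‖z - c‖ ^ 2) Y p) :
    IsProxPoint Y g ρ (c + ρ • G) p := by
  refine ⟨hp, fun u hu => ?_⟩
  have hmax' : IsMaxOn (fun z => (F z - ρ⁻¹ / 2 * ‖z - c‖ ^ 2) - g z) Y p := by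
    refine isMaxOn_iff.mpr fun z hz => ?_
    have := isMaxOn_iff.mp hmax z hz
    rw [one_div, mul_inv, ← div_eq_inv_mul] at this
    linarith
  have := hg.le_sub_of_isMaxOn_sub (hF.sub_mul_norm_sub_sq ρ⁻¹ c).hasFDerivAt hmax' hp hu
  rw [toDual_apply_apply] at this
  calc ⟪c + ρ • G - p, u - p⟫ = ρ * ⟪G - ρ⁻¹ • (p - c), u - p⟫ := by
        rw [← real_inner_smul_left, smul_sub, smul_inv_smul₀ hρ.ne']
        congr 1
        abel
    _ ≤ ρ * (g u - g p) := mul_le_mul_of_nonneg_left this hρ.le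

theorem IsProxPoint.norm_sub_le {Y : Set E} {g : E → ℝ} {ρ : ℝ} {w₁ w₂ p₁ p₂ : E}
    (h₁ : IsProxPoint Y g ρ w₁ p₁) (h₂ : IsProxPoint Y g ρ w₂ p₂) :
    ‖p₁ - p₂‖ ≤ ‖w₁ - w₂‖ := by
  have hmono : ‖p₁ - p₂‖ ^ 2 ≤ ⟪w₁ - w₂, p₁ - p₂⟫ := by
    have h₁₂ := h₁.2 p₂ h₂.1
    have h₂₁ := h₂.2 p₁ h₁.1
    rw [← real_inner_self_eq_norm_sq]
    simp only [inner_sub_left, inner_sub_right] at h₁₂ h₂₁ ⊢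
    linarith
  have := hmono.trans (real_inner_le_norm _ _)
  nlinarith [norm_nonneg (p₁ - p₂), norm_nonneg (w₁ - w₂)]

end Prox

theorem le_mul_add_mul_of_le_mul_sqrt {a b c L : ℝ} (ha : 0 ≤ a) (hb : 0 ≤ b) (hc : 0 ≤ c)
    (h : c ≤ L * √(a ^ 2 + b ^ 2)) : c ≤ L * a + L * b := by
  have hsqrt : √(a ^ 2 + b ^ 2) ≤ a + b :=
    Real.sqrt_le_iff.mpr ⟨by positivity, by nlinarith⟩
  rcases le_or_gt 0 L with hL | hL
  · nlinarith
  · have hs : √(a ^ 2 + b ^ 2) = 0 := by nlinarith [Real.sqrt_nonneg (a ^ 2 + b ^ 2)]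
    rw [Real.sqrt_eq_zero (by positivity)] at hs
    have ha0 : a = 0 := by nlinarith
    have hb0 : b = 0 := by nlinarith
    subst ha0 hb0
    simpa using h

theorem hibsa_gap_y_bound_concave_general
    {n M : ℕ}
    -- Assumption A
    (X : Set (EuclideanSpace ℝ (Fin n)))
    (Y : Set (EuclideanSpace ℝ (Fin M))) (hYconv : Convex ℝ Y)
    (f : EuclideanSpace ℝ (Fin n) → EuclideanSpace ℝ (Fin M) → ℝ)
    (g : EuclideanSpace ℝ (Fin M) → ℝ) (hgconv : ConvexOn ℝ Set.univ g)
    (Gfy : EuclideanSpace ℝ (Fin n) → EuclideanSpace ℝ (Fin M) → EuclideanSpace ℝ (Fin M))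
    (hGfy : ∀ x y, HasGradientAt (fun z => f x z) (Gfy x y) y)
    (Ly : ℝ)
    (hLy : ∀ (x x' : EuclideanSpace ℝ (Fin n)) (y y' : EuclideanSpace ℝ (Fin M)),
      x ∈ X → x' ∈ X → y ∈ Y → y' ∈ Y →
      ‖Gfy x' y' - Gfy x y‖ ≤ Ly * Real.sqrt (‖x' - x‖ ^ 2 + ‖y' - y‖ ^ 2))
    -- one regularized exact y-update from (x', y)
    (ρ γr : ℝ) (hρ : 0 < ρ) (hγr : 0 < γr)
    (x x' : EuclideanSpace ℝ (Fin n)) (hx : x ∈ X) (hx' : x' ∈ X)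
    (y y' : EuclideanSpace ℝ (Fin M)) (hy : y ∈ Y)
    (hyup : y' ∈ Y ∧ ∀ u ∈ Y,
      f x' u - g u - 1 / (2 * ρ) * ‖u - y‖ ^ 2 - γr / 2 * ‖u‖ ^ 2
        ≤ f x' y' - g y' - 1 / (2 * ρ) * ‖y' - y‖ ^ 2 - γr / 2 * ‖y'‖ ^ 2)
    -- the proximity operator
    (Py : EuclideanSpace ℝ (Fin M) → EuclideanSpace ℝ (Fin M))
    (hPy : ∀ w, Py w ∈ Y ∧
      ∀ z ∈ Y, -g z - 1 / (2 * ρ) * ‖z - w‖ ^ 2 ≤ -g (Py w) - 1 / (2 * ρ) * ‖Py w - w‖ ^ 2) :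
    -- conclusion
    ρ⁻¹ * ‖y - Py (y + ρ • Gfy x y)‖
      ≤ Ly * ‖x' - x‖ + (1 / ρ + Ly) * ‖y' - y‖ + γr * ‖y'‖ := by
  set v := y + ρ • Gfy x y
  obtain ⟨hy'Y, hy'max⟩ := hyup
  obtain ⟨hPY, hPmax⟩ := hPy v
  have hg : ConvexOn ℝ Y g := hgconv.subset (subset_univ Y) hYconv
  have hP : IsProxPoint Y g ρ v (Py v) := by
    have hF : HasGradientAt (fun _ => (0 : ℝ)) 0 (Py v) := hasGradientAt_const _ _
    have := isProxPoint_of_isMaxOn (c := v) hg hρ hF hPY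
      (isMaxOn_iff.mpr fun z hz => by simpa only [zero_sub] using hPmax z hz)
    rwa [smul_zero, add_zero] at this
  have hy' : IsProxPoint Y g ρ (y + ρ • (Gfy x' y' - γr • y')) y' := by
    have hF := (hGfy x' y').sub_mul_norm_sub_sq γr 0
    simp only [sub_zero] at hF
    exact isProxPoint_of_isMaxOn hg hρ hF hy'Y
      (isMaxOn_iff.mpr fun z hz => by have := hy'max z hz; linarith)
  have hLip : ‖Gfy x' y' - Gfy x y‖ ≤ Ly * ‖x' - x‖ + Ly * ‖y' - y‖ :=
    le_mul_add_mul_of_le_mul_sqrt (norm_nonneg _) (norm_nonneg _) (norm_nonneg _)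
      (hLy x x' y y' hx hx' hy hy'Y)
  have hshift : ‖y + ρ • (Gfy x' y' - γr • y') - v‖
      ≤ ρ * (‖Gfy x' y' - Gfy x y‖ + γr * ‖y'‖) := by
    rw [show y + ρ • (Gfy x' y' - γr • y') - v = ρ • (Gfy x' y' - Gfy x y - γr • y') by module,
      norm_smul, Real.norm_of_nonneg hρ.le]
    gcongr
    exact (norm_sub_le _ _).trans_eq (by rw [norm_smul, Real.norm_of_nonneg hγr.le])
  calc ρ⁻¹ * ‖y - Py v‖ ≤ ρ⁻¹ * (‖y' - y‖ + ‖y' - Py v‖) := by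
        gcongr
        simpa only [norm_sub_rev y y'] using norm_sub_le_norm_sub_add_norm_sub y y' (Py v)
    _ ≤ ρ⁻¹ * (‖y' - y‖ + ρ * (Ly * ‖x' - x‖ + Ly * ‖y' - y‖ + γr * ‖y'‖)) := by
        gcongr
        linarith [hy'.norm_sub_le hP, mul_le_mul_of_nonneg_left hLip hρ.le]
    _ = Ly * ‖x' - x‖ + (1 / ρ + Ly) * ‖y' - y‖ + γr * ‖y'‖ := by
        field_simp
        ring

/-- Bound on the `y`-block of the stationarity gap by the successive differences of the
iterates plus the penalty term, for the concave case of HiBSA: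
`(1/ρ)‖y^r − Py^{1/ρ}(y^r + ρ∇_y f(x^r, y^r))‖
 ≤ L_y‖x^{r+1} − x^r‖ + (1/ρ + L_y)‖y^{r+1} − y^r‖ + γ^r‖y^{r+1}‖`. -/
theorem hibsa_gap_y_bound_concave
    {n M : ℕ}
    -- Assumption A
    (X : Set (EuclideanSpace ℝ (Fin n))) (hXconv : Convex ℝ X) (hXcomp : IsCompact X)
    (Y : Set (EuclideanSpace ℝ (Fin M))) (hYconv : Convex ℝ Y) (hYcomp : IsCompact Y)
    (f : EuclideanSpace ℝ (Fin n) → EuclideanSpace ℝ (Fin M) → ℝ)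
    (g : EuclideanSpace ℝ (Fin M) → ℝ) (hgconv : ConvexOn ℝ Set.univ g)
    (Gfy : EuclideanSpace ℝ (Fin n) → EuclideanSpace ℝ (Fin M) → EuclideanSpace ℝ (Fin M))
    (hGfy : ∀ x y, HasGradientAt (fun z => f x z) (Gfy x y) y)
    (Ly : ℝ)
    (hLy : ∀ (x x' : EuclideanSpace ℝ (Fin n)) (y y' : EuclideanSpace ℝ (Fin M)),
      x ∈ X → x' ∈ X → y ∈ Y → y' ∈ Y →
      ‖Gfy x' y' - Gfy x y‖ ≤ Ly * Real.sqrt (‖x' - x‖ ^ 2 + ‖y' - y‖ ^ 2))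
    -- Assumption C-2 (concavity in y)
    (hC2 : ∀ (x : EuclideanSpace ℝ (Fin n)) (y z : EuclideanSpace ℝ (Fin M)),
      x ∈ X → z ∈ Y → y ∈ Y → f x y - f x z ≤ ⟪Gfy x z, y - z⟫)
    -- one regularized exact y-update from (x', y)
    (ρ γr : ℝ) (hρ : 0 < ρ) (hγr : 0 < γr)
    (x x' : EuclideanSpace ℝ (Fin n)) (hx : x ∈ X) (hx' : x' ∈ X)
    (y y' : EuclideanSpace ℝ (Fin M)) (hy : y ∈ Y)
    (hyup : y' ∈ Y ∧ ∀ u ∈ Y,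
      f x' u - g u - 1 / (2 * ρ) * ‖u - y‖ ^ 2 - γr / 2 * ‖u‖ ^ 2
        ≤ f x' y' - g y' - 1 / (2 * ρ) * ‖y' - y‖ ^ 2 - γr / 2 * ‖y'‖ ^ 2)
    -- the proximity operator
    (Py : EuclideanSpace ℝ (Fin M) → EuclideanSpace ℝ (Fin M))
    (hPy : ∀ w, Py w ∈ Y ∧
      ∀ z ∈ Y, -g z - 1 / (2 * ρ) * ‖z - w‖ ^ 2 ≤ -g (Py w) - 1 / (2 * ρ) * ‖Py w - w‖ ^ 2) :
    -- conclusion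
    ρ⁻¹ * ‖y - Py (y + ρ • Gfy x y)‖
      ≤ Ly * ‖x' - x‖ + (1 / ρ + Ly) * ‖y' - y‖ + γr * ‖y'‖ :=
  hibsa_gap_y_bound_concave_general X Y hYconv f g hgconv Gfy hGfy Ly hLy ρ γr hρ hγr x x' hx hx' y
    y' hy hyup Py hPy
end
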